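/- arXiv:2011.11441 — 6 statements merged into one kernel-verified Lean document; each statement's English description precedes it below -/
import Mathlib

section
/- Let A be an n×n real matrix, B an n×m real matrix, Q an n×n real symmetric positive definite matrix, R an m×m real symmetric positive definite matrix, and K an m×n real matrix such that Φ = A + BK has spectral radius strictly less than 1. Let P be an n×n real symmetric matrix satisfying the Lyapunov equation P = ΦᵀPΦ + Q + KᵀRK, and assume the LQR optimality condition BᵀPΦ + RK = 0. Fix N ∈ ℕ, an initial state x ∈ ℝⁿ and vectors c_0, …, c_{N−1} ∈ ℝᵐ, and set c_l = 0 for l ≥ N. Define z_0 = x, z_{l+1} = Φ z_l + B c_l, and v_l = K z_l + c_l for all l ≥ 0. Then the series Σ_{l=0}^∞ (z_lᵀ Q z_l + v_lᵀ R v_l) converges and equals Σ_{l=0}^{N−1} c_lᵀ (R + BᵀPB) c_l + xᵀ P x. -/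
/-! With `V z = zᵀ P z`, the Lyapunov equation and the optimality condition `BᵀPΦ + RK = 0`
give the one-step Bellman identity `zᵀQz + vᵀRv + V (Φz + Bc) = V z + cᵀ(R + BᵀPB)c` for
`v = Kz + c` (the cross terms in `c` cancel). Hence the partial sums of the cost telescope to
`Σ_{l<M} cₗᵀ(R + BᵀPB)cₗ + V x - V z_M`. Once `c` vanishes the state evolves by `Φ`, whose powers
tend to zero by Gelfand's formula, so `V z_M → 0`; the stage costs are nonnegative, so convergence
of the partial sums is summability. -/

open Matrix Filter Topology

section SpectralRadius

variable {A : Type*} [NormedRing A] [NormedAlgebra ℂ A] [CompleteSpace A]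

theorem spectrum.spectralRadius_lt_one_of_forall_norm_lt_one {a : A}
    (h : ∀ z ∈ spectrum ℂ a, ‖z‖ < 1) : spectralRadius ℂ a < 1 := by
  rcases (spectrum ℂ a).eq_empty_or_nonempty with hempty | hne
  · simp [spectralRadius, hempty]
  · exact_mod_cast spectrum.spectralRadius_lt_of_forall_lt_of_nonempty hne
      fun z hz => by simpa [← NNReal.coe_lt_coe] using h z hz

theorem spectrum.tendsto_pow_atTop_nhds_zero_of_spectralRadius_lt_one {a : A}
    (h : spectralRadius ℂ a < 1) : Tendsto (a ^ ·) atTop (𝓝 0) := by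
  obtain ⟨r, hr, hr1⟩ := ENNReal.lt_iff_exists_nnreal_btwn.mp h
  have hbound : ∀ᶠ k : ℕ in atTop, ‖a ^ k‖ ≤ r ^ k := by
    have hgelfand := spectrum.pow_nnnorm_pow_one_div_tendsto_nhds_spectralRadius a
    filter_upwards [hgelfand.eventually_lt_const hr, eventually_gt_atTop 0] with k hk hk0
    rw [one_div, ENNReal.rpow_inv_lt_iff (by positivity), ENNReal.rpow_natCast] at hk
    exact_mod_cast hk.le
  exact squeeze_zero_norm' hbound
    (tendsto_pow_atTop_nhds_zero_of_lt_one r.coe_nonneg (by exact_mod_cast hr1))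

end SpectralRadius

-- Any algebra norm serves for Gelfand's formula; this one induces the entrywise topology.
attribute [local instance] Matrix.linftyOpNormedRing Matrix.linftyOpNormedAlgebra

theorem Matrix.tendsto_pow_atTop_nhds_zero_of_forall_spectrum_norm_lt_one {ι : Type*} [Fintype ι]
    [DecidableEq ι] {M : Matrix ι ι ℝ}
    (h : ∀ z ∈ spectrum ℂ (M.map (algebraMap ℝ ℂ)), ‖z‖ < 1) :
    Tendsto (M ^ ·) atTop (𝓝 0) := by
  have hc := spectrum.tendsto_pow_atTop_nhds_zero_of_spectralRadius_lt_one
    (spectrum.spectralRadius_lt_one_of_forall_norm_lt_one h)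
  have hre : ∀ k : ℕ, M ^ k = ((M.map (algebraMap ℝ ℂ)) ^ k).map Complex.re := by
    intro k
    rw [← RingHom.mapMatrix_apply, ← map_pow, RingHom.mapMatrix_apply, Matrix.map_map]
    exact (Matrix.map_id' _).symm
  simpa [hre, Function.comp_def] using
    ((continuous_id.matrix_map Complex.continuous_re).tendsto 0).comp hc

theorem Matrix.tendsto_nhds_zero_of_succ_eq_mulVec {R ι : Type*} [Semiring R]
    [TopologicalSpace R] [IsTopologicalSemiring R] [Fintype ι] [DecidableEq ι] {M : Matrix ι ι R}
    (hM : Tendsto (M ^ ·) atTop (𝓝 0)) {z : ℕ → ι → R} {N : ℕ}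
    (hz : ∀ l, N ≤ l → z (l + 1) = M *ᵥ z l) : Tendsto z atTop (𝓝 0) := by
  have hpow : ∀ k, z (k + N) = M ^ k *ᵥ z N := by
    intro k
    induction k with
    | zero => simp
    | succ k ih => rw [add_right_comm, hz _ (by omega), ih, mulVec_mulVec, pow_succ']
  rw [← tendsto_add_atTop_iff_nat N, funext hpow]
  simpa [Function.comp_def] using
    ((continuous_id.matrix_mulVec (continuous_const (y := z N))).tendsto 0).comp hM

theorem Matrix.mulVec_dotProduct_eq_dotProduct_transpose_mulVec {R m n : Type*} [CommSemiring R]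
    [Fintype m] [Fintype n] (M : Matrix m n R) (u : n → R) (v : m → R) :
    M *ᵥ u ⬝ᵥ v = u ⬝ᵥ Mᵀ *ᵥ v := by
  rw [dotProduct_transpose_mulVec, dotProduct_comm]

section LQR

variable {α ι κ : Type*} [CommRing α] [Fintype ι] [Fintype κ]
  {Φ P Q : Matrix ι ι α} {B : Matrix ι κ α} {K : Matrix κ ι α} {W : Matrix κ κ α}

theorem lqr_stageCost_add_value_succ (hP : P.IsSymm) (hW : W.IsSymm)
    (hLyap : P = Φᵀ * P * Φ + Q + Kᵀ * W * K) (hLQR : Bᵀ * P * Φ + W * K = 0)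
    (w : ι → α) (d : κ → α) :
    w ⬝ᵥ Q *ᵥ w + (K *ᵥ w + d) ⬝ᵥ W *ᵥ (K *ᵥ w + d)
      + (Φ *ᵥ w + B *ᵥ d) ⬝ᵥ P *ᵥ (Φ *ᵥ w + B *ᵥ d)
    = w ⬝ᵥ P *ᵥ w + d ⬝ᵥ (W + Bᵀ * P * B) *ᵥ d := by
  have hBPΦ : Bᵀ * P * Φ = -(W * K) := eq_neg_of_add_eq_zero_left hLQR
  have hΦPB : Φᵀ * P * B = -(Kᵀ * W) := by
    simpa [transpose_mul, Matrix.mul_assoc, hP.eq, hW.eq] using congr_arg transpose hBPΦ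
  have hΦPΦ : Φᵀ * P * Φ = P - Kᵀ * W * K - Q := eq_sub_of_add_eq (eq_sub_of_add_eq hLyap.symm)
  simp only [mulVec_add, dotProduct_add, add_dotProduct,
    mulVec_dotProduct_eq_dotProduct_transpose_mulVec, mulVec_mulVec, add_mulVec,
    ← Matrix.mul_assoc]
  rw [hΦPΦ, hBPΦ, hΦPB]
  simp only [sub_mulVec, neg_mulVec, dotProduct_sub, dotProduct_neg]
  ring

theorem lqr_sum_range_stageCost (hP : P.IsSymm) (hW : W.IsSymm)
    (hLyap : P = Φᵀ * P * Φ + Q + Kᵀ * W * K) (hLQR : Bᵀ * P * Φ + W * K = 0)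
    {c : ℕ → κ → α} {z : ℕ → ι → α} {v : ℕ → κ → α}
    (hz : ∀ l, z (l + 1) = Φ *ᵥ z l + B *ᵥ c l) (hv : ∀ l, v l = K *ᵥ z l + c l) (M : ℕ) :
    ∑ l ∈ Finset.range M, (z l ⬝ᵥ Q *ᵥ z l + v l ⬝ᵥ W *ᵥ v l)
      = ∑ l ∈ Finset.range M, c l ⬝ᵥ (W + Bᵀ * P * B) *ᵥ c l
        + (z 0 ⬝ᵥ P *ᵥ z 0 - z M ⬝ᵥ P *ᵥ z M) := by
  have hstep : ∀ l, z l ⬝ᵥ Q *ᵥ z l + v l ⬝ᵥ W *ᵥ v l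
      = c l ⬝ᵥ (W + Bᵀ * P * B) *ᵥ c l
        + (z l ⬝ᵥ P *ᵥ z l - z (l + 1) ⬝ᵥ P *ᵥ z (l + 1)) := by
    intro l
    rw [hv, hz]
    linear_combination lqr_stageCost_add_value_succ hP hW hLyap hLQR (z l) (c l)
  rw [Finset.sum_congr rfl fun l _ => hstep l, Finset.sum_add_distrib, Finset.sum_range_sub']

end LQR

/-- the infinite-horizon cost identity (13)/(A.3): with an LQR-optimal terminal
feedback `K` for the Schur-stable closed loop `Φ = A + BK`, the infinite-horizon nominal cost
`Σ_l (zₗᵀQzₗ + vₗᵀRvₗ)` equals `Σ_{l<N} cₗᵀ(R + BᵀPB)cₗ + xᵀPx`. -/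
theorem infinite_horizon_cost_identity {n m : ℕ}
    (A : Matrix (Fin n) (Fin n) ℝ) (B : Matrix (Fin n) (Fin m) ℝ)
    (Q : Matrix (Fin n) (Fin n) ℝ) (R : Matrix (Fin m) (Fin m) ℝ)
    (K : Matrix (Fin m) (Fin n) ℝ) (P : Matrix (Fin n) (Fin n) ℝ)
    (hQ : Q.PosDef) (hR : R.PosDef) (hP : P.IsSymm)
    (hΦ : ∀ z ∈ spectrum ℂ ((A + B * K).map (algebraMap ℝ ℂ)), ‖z‖ < 1)
    (hLyap : P = (A + B * K)ᵀ * P * (A + B * K) + Q + Kᵀ * R * K)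
    (hLQR : Bᵀ * P * (A + B * K) + R * K = 0)
    (N : ℕ) (x : Fin n → ℝ) (c : ℕ → Fin m → ℝ) (hc : ∀ l, N ≤ l → c l = 0)
    (z : ℕ → Fin n → ℝ) (v : ℕ → Fin m → ℝ)
    (hz0 : z 0 = x)
    (hz : ∀ l, z (l + 1) = (A + B * K) *ᵥ z l + B *ᵥ c l)
    (hv : ∀ l, v l = K *ᵥ z l + c l) :
    HasSum (fun l : ℕ => z l ⬝ᵥ (Q *ᵥ z l) + v l ⬝ᵥ (R *ᵥ v l))
      ((∑ l ∈ Finset.range N, c l ⬝ᵥ ((R + Bᵀ * P * B) *ᵥ c l)) + x ⬝ᵥ (P *ᵥ x)) := by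
  have hpartial := lqr_sum_range_stageCost hP (isHermitian_iff_isSymm.mp hR.isHermitian)
    hLyap hLQR hz hv
  have hcost : HasSum (fun l => c l ⬝ᵥ (R + Bᵀ * P * B) *ᵥ c l)
      (∑ l ∈ Finset.range N, c l ⬝ᵥ (R + Bᵀ * P * B) *ᵥ c l) :=
    hasSum_sum_of_ne_finset_zero fun l hl => by simp [hc l (by simpa using hl)]
  have hdecay : Tendsto z atTop (𝓝 0) :=
    tendsto_nhds_zero_of_succ_eq_mulVec
      (tendsto_pow_atTop_nhds_zero_of_forall_spectrum_norm_lt_one hΦ) (N := N)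
      fun l hl => by simp [hz, hc l hl]
  have hvalue : Tendsto (fun M => z M ⬝ᵥ P *ᵥ z M) atTop (𝓝 0) := by
    have hcont : Continuous fun w : Fin n → ℝ => w ⬝ᵥ P *ᵥ w :=
      continuous_id.dotProduct (continuous_const.matrix_mulVec continuous_id)
    simpa [Function.comp_def] using (hcont.tendsto 0).comp hdecay
  have hnonneg : ∀ l, 0 ≤ z l ⬝ᵥ Q *ᵥ z l + v l ⬝ᵥ R *ᵥ v l := fun l =>
    add_nonneg (by simpa using hQ.posSemidef.dotProduct_mulVec_nonneg (z l))
      (by simpa using hR.posSemidef.dotProduct_mulVec_nonneg (v l))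
  rw [hasSum_iff_tendsto_nat_of_nonneg hnonneg]
  simp_rw [hpartial, hz0]
  simpa using hcost.tendsto_sum_nat.add (tendsto_const_nhds.sub hvalue)
end

section
/- Let Φ be an n×n real matrix with spectral radius strictly less than 1, B an n×m real matrix, and W ⊆ ℝⁿ a bounded set. Let (c_k) be a sequence in ℝᵐ with ‖c_k‖ → 0, let (w_k) be a sequence with w_k ∈ W for all k, and define x_{k+1} = Φ x_k + B c_k + w_k from an arbitrary x_0 ∈ ℝⁿ. Then the distance from x_k to the Minkowski sum Σ_{i=0}^{k−1} (Φⁱ '' W) tends to 0 as k → ∞, where Φⁱ '' W = { Φⁱ w : w ∈ W } and the distance of a point to a set is the infimum of Euclidean distances. -/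
/-!
Let `p` be the state driven by the disturbance alone, `p₀ = 0`, `p_{k+1} = Φ p_k + w_k`. Unrolling
the recursion, `p_k = Σ_{i<k} Φⁱ w_{k-1-i}` lies in the Minkowski sum, so it suffices that the error
`e_k = x_k - p_k` tends to `0`. It obeys `e_{k+1} = Φ e_k + B c_k`, hence
`e_k = Φᵏ e₀ + Σ_{i<k} Φⁱ B c_{k-1-i}`. Gelfand's formula, applied to `Φ` viewed as a complex
matrix, makes `Σ ‖Φᵏ‖` finite, and the convolution of a summable sequence with a null sequence is
null.
-/

open Matrix Pointwise Filter Finset Topology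

theorem tendsto_sum_range_mul_sub_of_summable {f u : ℕ → ℝ} (hf : Summable f)
    (hu : Tendsto u atTop (𝓝 0)) :
    Tendsto (fun k => ∑ i ∈ range k, f i * u (k - 1 - i)) atTop (𝓝 0) := by
  obtain ⟨M, hM⟩ := hu.norm.bddAbove_range
  have hM0 : 0 ≤ M := (norm_nonneg _).trans (hM ⟨0, rfl⟩)
  have h_tsum : ∀ k, ∑ i ∈ range k, f i * u (k - 1 - i)
      = ∑' i, if i < k then f i * u (k - 1 - i) else 0 := fun k => by
    rw [tsum_eq_sum (s := range k) fun i hi => if_neg (by simpa using hi)]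
    exact sum_congr rfl fun i hi => (if_pos (mem_range.mp hi)).symm
  simp_rw [h_tsum]
  rw [← tsum_zero]
  refine tendsto_tsum_of_dominated_convergence (bound := fun i => |f i| * M)
    (hf.abs.mul_right M) (fun i => ?_) (Eventually.of_forall fun k i => ?_)
  · have hlim : Tendsto (fun k => f i * u (k - (i + 1))) atTop (𝓝 0) := by
      simpa using (hu.comp (tendsto_sub_atTop_nat (i + 1))).const_mul (f i)
    refine hlim.congr' ?_
    filter_upwards [eventually_gt_atTop i] with k hk
    rw [if_pos hk, Nat.sub_sub, add_comm]
  · split_ifs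
    · rw [norm_mul, Real.norm_eq_abs]
      exact mul_le_mul_of_nonneg_left (hM ⟨_, rfl⟩) (abs_nonneg _)
    · simpa using mul_nonneg (abs_nonneg (f i)) hM0

namespace ContinuousLinearMap

theorem eq_pow_apply_add_sum_of_forall_succ {R M : Type*} [Semiring R] [TopologicalSpace M]
    [AddCommMonoid M] [Module R M] {T : M →L[R] M} {e d : ℕ → M}
    (he : ∀ k, e (k + 1) = T (e k) + d k) (k : ℕ) :
    e k = (T ^ k) (e 0) + ∑ i ∈ range k, (T ^ i) (d (k - 1 - i)) := by
  induction k with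
  | zero => simp
  | succ k ih =>
    rw [he, ih, map_add, map_sum, sum_range_succ', pow_zero, one_apply_eq_self, Nat.add_sub_cancel,
      Nat.sub_zero, pow_succ', mul_apply_eq_comp, add_assoc]
    congr 2
    refine sum_congr rfl fun i _ => ?_
    rw [pow_succ', mul_apply_eq_comp, Nat.sub_sub, Nat.add_comm 1 i]

variable {𝕜 E : Type*} [NontriviallyNormedField 𝕜] [NormedAddCommGroup E] [NormedSpace 𝕜 E]

theorem tendsto_zero_of_summable_norm_pow {T : E →L[𝕜] E} (hT : Summable fun k => ‖T ^ k‖)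
    {e d : ℕ → E} (he : ∀ k, e (k + 1) = T (e k) + d k) (hd : Tendsto d atTop (𝓝 0)) :
    Tendsto e atTop (𝓝 0) := by
  have h_bound : ∀ k, ‖e k‖ ≤ ‖T ^ k‖ * ‖e 0‖ + ∑ i ∈ range k, ‖T ^ i‖ * ‖d (k - 1 - i)‖ := by
    intro k
    rw [eq_pow_apply_add_sum_of_forall_succ he k]
    refine (norm_add_le _ _).trans (add_le_add ((T ^ k).le_opNorm _) ?_)
    exact (norm_sum_le _ _).trans (sum_le_sum fun i _ => (T ^ i).le_opNorm _)
  have h_lim : Tendsto (fun k => ‖T ^ k‖ * ‖e 0‖ + ∑ i ∈ range k, ‖T ^ i‖ * ‖d (k - 1 - i)‖)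
      atTop (𝓝 0) := by
    simpa using (hT.tendsto_atTop_zero.mul_const ‖e 0‖).add
      (tendsto_sum_range_mul_sub_of_summable hT (tendsto_zero_iff_norm_tendsto_zero.mp hd))
  exact tendsto_zero_iff_norm_tendsto_zero.mpr
    (squeeze_zero (fun _ => norm_nonneg _) h_bound h_lim)

end ContinuousLinearMap

theorem summable_norm_pow_of_forall_norm_lt_one {A : Type*} [NormedRing A] [NormedAlgebra ℂ A]
    [CompleteSpace A] {a : A} (ha : ∀ z ∈ spectrum ℂ a, ‖z‖ < 1) :
    Summable fun k => ‖a ^ k‖ := by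
  have hρ : spectralRadius ℂ a < 1 := by
    rcases (spectrum ℂ a).eq_empty_or_nonempty with h | h
    · simp [spectralRadius, h]
    · simpa using spectrum.spectralRadius_lt_of_forall_lt_of_nonempty h (r := 1)
        fun z hz => by simpa [← NNReal.coe_lt_coe] using ha z hz
  obtain ⟨r, hρr, hr1⟩ := ENNReal.lt_iff_exists_nnreal_btwn.mp hρ
  have h_gelfand :=
    (spectrum.pow_norm_pow_one_div_tendsto_nhds_spectralRadius a).eventually_lt_const hρr
  refine Summable.of_norm_bounded_eventually_nat
    (summable_geometric_of_lt_one r.coe_nonneg (by exact_mod_cast hr1)) ?_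
  filter_upwards [h_gelfand, eventually_gt_atTop 0] with k hk hk0
  rw [ENNReal.ofReal_lt_coe_iff (by positivity), one_div,
    Real.rpow_inv_lt_iff_of_pos (norm_nonneg _) r.coe_nonneg (by positivity),
    Real.rpow_natCast] at hk
  rw [norm_norm]
  exact hk.le

namespace Matrix

variable {ι : Type*} [Fintype ι] [DecidableEq ι]

theorem norm_toEuclideanCLM_le_map_ofReal (A : Matrix ι ι ℝ) :
    ‖toEuclideanCLM (𝕜 := ℝ) A‖ ≤ ‖toEuclideanCLM (𝕜 := ℂ) (A.map (algebraMap ℝ ℂ))‖ := by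
  set T := toEuclideanCLM (𝕜 := ℝ) A
  set Tℂ := toEuclideanCLM (𝕜 := ℂ) (A.map (algebraMap ℝ ℂ))
  refine T.opNorm_le_bound (norm_nonneg _) fun x => ?_
  let toC : EuclideanSpace ℝ ι → EuclideanSpace ℂ ι := fun y => WithLp.toLp 2 fun i => (y i : ℂ)
  have h_norm : ∀ y, ‖toC y‖ = ‖y‖ := fun y => by simp [toC, EuclideanSpace.norm_eq]
  have h_comm : Tℂ (toC x) = toC (T x) := by
    ext i
    simp [T, Tℂ, toC, mulVec, dotProduct]
  calc ‖T x‖ = ‖Tℂ (toC x)‖ := by rw [h_comm, h_norm]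
    _ ≤ ‖Tℂ‖ * ‖x‖ := (Tℂ.le_opNorm _).trans_eq (by rw [h_norm])

theorem summable_norm_toEuclideanCLM_pow (A : Matrix ι ι ℝ)
    (hA : ∀ z ∈ spectrum ℂ (A.map (algebraMap ℝ ℂ)), ‖z‖ < 1) :
    Summable fun k => ‖toEuclideanCLM (𝕜 := ℝ) A ^ k‖ := by
  have h_complex := summable_norm_pow_of_forall_norm_lt_one
    (a := toEuclideanCLM (𝕜 := ℂ) (A.map (algebraMap ℝ ℂ)))
    (by rwa [AlgEquiv.spectrum_eq (toEuclideanCLM (𝕜 := ℂ))])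
  refine h_complex.of_nonneg_of_le (fun _ => norm_nonneg _) fun k => ?_
  rw [← map_pow, ← map_pow, ← Matrix.map_pow]
  exact norm_toEuclideanCLM_le_map_ofReal _

end Matrix

theorem state_converges_to_mRPI_general {n m : ℕ}
    (Φ : Matrix (Fin n) (Fin n) ℝ) (B : Matrix (Fin n) (Fin m) ℝ)
    (W : Set (EuclideanSpace ℝ (Fin n)))
    (hΦ : ∀ z ∈ spectrum ℂ (Φ.map (algebraMap ℝ ℂ)), ‖z‖ < 1)
    (c : ℕ → EuclideanSpace ℝ (Fin m))
    (hc : Filter.Tendsto (fun k => ‖c k‖) Filter.atTop (nhds 0))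
    (w : ℕ → EuclideanSpace ℝ (Fin n)) (hw : ∀ k, w k ∈ W)
    (x : ℕ → EuclideanSpace ℝ (Fin n))
    (hx : ∀ k, x (k + 1)
      = (WithLp.equiv 2 (Fin n → ℝ)).symm (Φ *ᵥ x k + B *ᵥ c k) + w k) :
    Filter.Tendsto
      (fun k => Metric.infDist (x k)
        (∑ i ∈ Finset.range k,
          (fun (v : EuclideanSpace ℝ (Fin n)) => (WithLp.equiv 2 (Fin n → ℝ)).symm ((Φ ^ i) *ᵥ v)) '' W))
      Filter.atTop (nhds 0) := by
  let T := toEuclideanCLM (𝕜 := ℝ) Φ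
  let d k := toEuclideanLin B (c k)
  have hd : Tendsto d atTop (𝓝 0) :=
    ((toEuclideanLin B).continuous_of_finiteDimensional.tendsto' 0 0 (map_zero _)).comp
      (tendsto_zero_iff_norm_tendsto_zero.mpr hc)
  let p : ℕ → EuclideanSpace ℝ (Fin n) := fun k => Nat.rec 0 (fun k pk => T pk + w k) k
  have hp_mem (k : ℕ) : p k ∈ ∑ i ∈ range k, (fun v : EuclideanSpace ℝ (Fin n) =>
      (WithLp.equiv 2 (Fin n → ℝ)).symm ((Φ ^ i) *ᵥ v)) '' W := by
    rw [ContinuousLinearMap.eq_pow_apply_add_sum_of_forall_succ (e := p) (d := w) (fun _ => rfl) k,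
      show p 0 = 0 from rfl, map_zero, zero_add]
    exact Set.finsetSum_mem_finsetSum _ _ _ fun i _ =>
      ⟨w (k - 1 - i), hw _, by rw [← map_pow]; rfl⟩
  have h_err : Tendsto (fun k => x k - p k) atTop (𝓝 0) := by
    refine ContinuousLinearMap.tendsto_zero_of_summable_norm_pow
      (summable_norm_toEuclideanCLM_pow Φ hΦ) (fun k => ?_) hd
    rw [hx, show p (k + 1) = T (p k) + w k from rfl, map_sub, WithLp.equiv_symm_apply,
      WithLp.toLp_add]
    show T (x k) + d k + w k - (T (p k) + w k) = T (x k) - T (p k) + d k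
    abel
  exact squeeze_zero (fun _ => Metric.infDist_nonneg)
    (fun k => (Metric.infDist_le_dist_of_mem (hp_mem k)).trans_eq (dist_eq_norm _ _))
    (tendsto_zero_iff_norm_tendsto_zero.mp h_err)

/-- the asymptotic convergence claim (E.5)–(E.6): if `Φ` is Schur stable,
`‖c_k‖ → 0` and `w_k ∈ W` with `W` bounded, then the Euclidean distance from the closed-loop
state `x_k` (with `x_{k+1} = Φ x_k + B c_k + w_k`) to the Minkowski sum `Σ_{i<k} Φⁱ '' W`
tends to `0`. -/
theorem state_converges_to_mRPI {n m : ℕ}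
    (Φ : Matrix (Fin n) (Fin n) ℝ) (B : Matrix (Fin n) (Fin m) ℝ)
    (W : Set (EuclideanSpace ℝ (Fin n)))
    (hΦ : ∀ z ∈ spectrum ℂ (Φ.map (algebraMap ℝ ℂ)), ‖z‖ < 1)
    (hW : Bornology.IsBounded W)
    (c : ℕ → EuclideanSpace ℝ (Fin m))
    (hc : Filter.Tendsto (fun k => ‖c k‖) Filter.atTop (nhds 0))
    (w : ℕ → EuclideanSpace ℝ (Fin n)) (hw : ∀ k, w k ∈ W)
    (x : ℕ → EuclideanSpace ℝ (Fin n))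
    (hx : ∀ k, x (k + 1)
      = (WithLp.equiv 2 (Fin n → ℝ)).symm (Φ *ᵥ x k + B *ᵥ c k) + w k) :
    Filter.Tendsto
      (fun k => Metric.infDist (x k)
        (∑ i ∈ Finset.range k,
          (fun (v : EuclideanSpace ℝ (Fin n)) => (WithLp.equiv 2 (Fin n → ℝ)).symm ((Φ ^ i) *ᵥ v)) '' W))
      Filter.atTop (nhds 0) :=
  state_converges_to_mRPI_general Φ B W hΦ c hc w hw x hx
end

section
/- Let W ⊆ ℝⁿ be a nonempty compact set, a ∈ ℝⁿ, and ε ∈ (0,1). Then the supremum, over all Borel probability measures P on ℝⁿ with P(W) = 1, of CVaR_ε^P(ξ ↦ a·ξ) equals max_{ξ∈W} a·ξ, where CVaR_ε^P(L) = inf_{β∈ℝ} { β + ε⁻¹ ∫ (L(ξ) − β)⁺ dP(ξ) } and (x)⁺ = max(x,0). -/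
open Matrix MeasureTheory

/-- Conditional Value-at-Risk of the loss `L` at level `ε` under the probability measure `P`:
`CVaR_ε^P(L) = inf_β { β + ε⁻¹ ∫ (L ξ − β)⁺ dP }`. -/
noncomputable def cvar {n : ℕ} (P : Measure (Fin n → ℝ)) (ε : ℝ)
    (L : (Fin n → ℝ) → ℝ) : ℝ :=
  ⨅ β : ℝ, β + ε⁻¹ * ∫ ξ, max (L ξ - β) 0 ∂P

/-!
The CVaR of a loss never exceeds its essential supremum: choosing `β` equal to an a.e. upper
bound `M` kills the integral. Conversely it dominates the mean, since `ε⁻¹ ≥ 1` and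
`(L − β)⁺ ≥ L − β`; under a Dirac mass at a maximiser `ξ₀` the mean and the essential supremum
agree, so that point mass attains the bound `a ⬝ᵥ ξ₀`.
-/

section CVaR

variable {n : ℕ} {P : Measure (Fin n → ℝ)} [IsProbabilityMeasure P] {ε : ℝ}
  {L : (Fin n → ℝ) → ℝ}

theorem integral_le_cvar_objective (hε : 0 < ε) (hε1 : ε ≤ 1) (hL : Integrable L P) (β : ℝ) :
    ∫ ξ, L ξ ∂P ≤ β + ε⁻¹ * ∫ ξ, max (L ξ - β) 0 ∂P := by
  have hpos : Integrable (fun ξ => max (L ξ - β) 0) P := (hL.sub (integrable_const β)).pos_part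
  have hmean : ∫ ξ, L ξ ∂P - β ≤ ∫ ξ, max (L ξ - β) 0 ∂P := by
    calc ∫ ξ, L ξ ∂P - β = ∫ ξ, (L ξ - β) ∂P := by
          rw [integral_sub hL (integrable_const β), integral_const, probReal_univ, one_smul]
      _ ≤ ∫ ξ, max (L ξ - β) 0 ∂P :=
          integral_mono (hL.sub (integrable_const β)) hpos fun ξ => le_max_left _ _
  have hinv : 1 ≤ ε⁻¹ := one_le_inv₀ hε |>.mpr hε1
  have hnonneg : 0 ≤ ∫ ξ, max (L ξ - β) 0 ∂P := integral_nonneg fun ξ => le_max_right _ _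
  nlinarith

theorem bddBelow_cvar_objective (hε : 0 < ε) (hε1 : ε ≤ 1) (hL : Integrable L P) :
    BddBelow (Set.range fun β : ℝ => β + ε⁻¹ * ∫ ξ, max (L ξ - β) 0 ∂P) :=
  ⟨∫ ξ, L ξ ∂P, by
    rintro _ ⟨β, rfl⟩
    exact integral_le_cvar_objective hε hε1 hL β⟩

theorem integral_le_cvar (hε : 0 < ε) (hε1 : ε ≤ 1) (hL : Integrable L P) :
    ∫ ξ, L ξ ∂P ≤ cvar P ε L :=
  le_ciInf (integral_le_cvar_objective hε hε1 hL)

theorem cvar_le_of_ae_le (hε : 0 < ε) (hε1 : ε ≤ 1) (hL : Integrable L P) {M : ℝ}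
    (hM : ∀ᵐ ξ ∂P, L ξ ≤ M) : cvar P ε L ≤ M := by
  have hzero : ∫ ξ, max (L ξ - M) 0 ∂P = 0 := by
    refine integral_eq_zero_of_ae ?_
    filter_upwards [hM] with ξ hξ
    exact max_eq_right (sub_nonpos.mpr hξ)
  calc cvar P ε L ≤ M + ε⁻¹ * ∫ ξ, max (L ξ - M) 0 ∂P :=
        ciInf_le (bddBelow_cvar_objective hε hε1 hL) M
    _ = M := by rw [hzero, mul_zero, add_zero]

end CVaR

theorem cvar_dirac {n : ℕ} {ε : ℝ} (hε : 0 < ε) (hε1 : ε ≤ 1) (L : (Fin n → ℝ) → ℝ)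
    (x : Fin n → ℝ) : cvar (Measure.dirac x) ε L = L x := by
  have hL : Integrable L (Measure.dirac x) := integrable_dirac enorm_lt_top
  refine le_antisymm (cvar_le_of_ae_le hε hε1 hL ?_) ?_
  · rw [ae_dirac_eq]
    exact Filter.eventually_pure.mpr le_rfl
  · simpa only [integral_dirac] using integral_le_cvar hε hε1 hL

theorem integrable_of_measure_eq_one {n : ℕ} {P : Measure (Fin n → ℝ)}
    [IsProbabilityMeasure P] {W : Set (Fin n → ℝ)} (hWc : IsCompact W) (hPW : P W = 1)
    {L : (Fin n → ℝ) → ℝ} (hL : Continuous L) : Integrable L P := by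
  have hae : ∀ᵐ ξ ∂P, ξ ∈ W :=
    (prob_compl_eq_zero_iff hWc.isClosed.measurableSet).mpr hPW
  rw [← Measure.restrict_eq_self_of_ae_mem hae]
  exact hL.continuousOn.integrableOn_compact hWc

/-- for a nonempty compact `W`, the supremum over all Borel probability measures
supported on `W` of the CVaR of the linear loss `ξ ↦ a·ξ` equals `max_{ξ ∈ W} a·ξ`. -/
theorem worst_case_cvar_eq_max {n : ℕ}
    (W : Set (Fin n → ℝ)) (hWc : IsCompact W) (hWne : W.Nonempty)
    (a : Fin n → ℝ) (ε : ℝ) (hε : ε ∈ Set.Ioo (0 : ℝ) 1) :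
    ∃ ξ₀ ∈ W, (∀ ξ ∈ W, a ⬝ᵥ ξ ≤ a ⬝ᵥ ξ₀) ∧
      sSup {v : ℝ | ∃ P : Measure (Fin n → ℝ),
          IsProbabilityMeasure P ∧ P W = 1 ∧ v = cvar P ε (fun ξ => a ⬝ᵥ ξ)}
        = a ⬝ᵥ ξ₀ := by
  obtain ⟨hε0, hε1⟩ := hε
  have hL : Continuous fun ξ : Fin n → ℝ => a ⬝ᵥ ξ := continuous_const.dotProduct continuous_id
  obtain ⟨ξ₀, hξ₀W, hmax⟩ := hWc.exists_isMaxOn hWne hL.continuousOn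
  refine ⟨ξ₀, hξ₀W, fun ξ hξ => hmax hξ, IsGreatest.csSup_eq ⟨?_, ?_⟩⟩
  · refine ⟨Measure.dirac ξ₀, inferInstance, ?_, (cvar_dirac hε0 hε1.le _ ξ₀).symm⟩
    rw [Measure.dirac_apply' _ hWc.isClosed.measurableSet, Set.indicator_of_mem hξ₀W, Pi.one_apply]
  · rintro _ ⟨P, hP, hPW, rfl⟩
    refine cvar_le_of_ae_le hε0 hε1.le (integrable_of_measure_eq_one hWc hPW hL) ?_
    filter_upwards [(prob_compl_eq_zero_iff hWc.isClosed.measurableSet).mpr hPW] with ξ hξ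
    exact hmax hξ
end

section
/- Let Ω be an n×n real symmetric positive semidefinite matrix, ω ∈ ℝⁿ, t ∈ ℝ, E an r×n real matrix, and f ∈ ℝ^r, and suppose there exists a Slater point ξ₀ ∈ ℝⁿ with Eξ₀ < f componentwise. If t + ξᵀω + ξᵀΩξ ≥ 0 for every ξ ∈ ℝⁿ with Eξ ≤ f, then there exists φ ∈ ℝ^r with φ ≥ 0 componentwise such that the (n+1)×(n+1) symmetric block matrix [[Ω, ½(ω + Eᵀφ)], [½(ω + Eᵀφ)ᵀ, t − fᵀφ]] is positive semidefinite. -/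
open Matrix

lemma bilin_symm' {n : ℕ} {Ω : Matrix (Fin n) (Fin n) ℝ} (hΩ : Ω.IsHermitian)
    (a b : Fin n → ℝ) : a ⬝ᵥ (Ω *ᵥ b) = b ⬝ᵥ (Ω *ᵥ a) := by
  simp only [dotProduct, mulVec, dotProduct, Finset.mul_sum]
  rw [Finset.sum_comm]
  refine Finset.sum_congr rfl fun i _ => Finset.sum_congr rfl fun j _ => ?_
  have h : Ω i j = Ω j i := by
    have := congrFun (congrFun hΩ.symm i) j
    simpa using this
  rw [h]; ring

lemma quad_fromBlocks' {n : ℕ} (Ω : Matrix (Fin n) (Fin n) ℝ) (v : Fin n → ℝ) (c : ℝ)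
    (x : Fin n ⊕ Unit → ℝ) :
    x ⬝ᵥ ((Matrix.fromBlocks Ω
        (Matrix.of fun i (_ : Unit) => v i / 2)
        (Matrix.of fun (_ : Unit) j => v j / 2)
        (Matrix.of fun (_ : Unit) (_ : Unit) => c)) *ᵥ x)
      = (fun i => x (Sum.inl i)) ⬝ᵥ (Ω *ᵥ fun i => x (Sum.inl i))
        + x (Sum.inr ()) * ((fun i => x (Sum.inl i)) ⬝ᵥ v)
        + c * (x (Sum.inr ()))^2 := by
  simp only [dotProduct, mulVec, Fintype.sum_sum_type, fromBlocks_apply₁₁,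
    fromBlocks_apply₁₂, fromBlocks_apply₂₁, fromBlocks_apply₂₂, of_apply,
    Finset.univ_unique, Finset.sum_singleton, Finset.mul_sum, Finset.sum_mul,
    mul_add, Finset.sum_add_distrib]
  ring_nf
  rw [add_assoc, ← Finset.sum_add_distrib]
  congr 1
  refine Finset.sum_congr rfl fun i _ => by ring

/-- necessity direction of the LMI reformulation (B.11)–(B.12): under a Slater
condition, nonnegativity of the convex quadratic `t + ξᵀω + ξᵀΩξ` on `{ξ : Eξ ≤ f}` yields a
nonnegative multiplier `φ` making the block matrix
`[[Ω, ½(ω + Eᵀφ)], [½(ω + Eᵀφ)ᵀ, t − fᵀφ]]` positive semidefinite. -/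
theorem nonneg_on_polyhedron_implies_lmi {n r : ℕ}
    (Ω : Matrix (Fin n) (Fin n) ℝ) (hΩ : Ω.PosSemidef)
    (ω : Fin n → ℝ) (t : ℝ)
    (E : Matrix (Fin r) (Fin n) ℝ) (f : Fin r → ℝ)
    (ξ₀ : Fin n → ℝ) (hSlater : ∀ i, (E *ᵥ ξ₀) i < f i)
    (hpos : ∀ ξ : Fin n → ℝ, (∀ i, (E *ᵥ ξ) i ≤ f i) →
      0 ≤ t + ξ ⬝ᵥ ω + ξ ⬝ᵥ (Ω *ᵥ ξ)) :
    ∃ φ : Fin r → ℝ, (∀ i, 0 ≤ φ i) ∧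
      (Matrix.fromBlocks Ω
        (Matrix.of fun i (_ : Unit) => (ω + Eᵀ *ᵥ φ) i / 2)
        (Matrix.of fun (_ : Unit) j => (ω + Eᵀ *ᵥ φ) j / 2)
        (Matrix.of fun (_ : Unit) (_ : Unit) => t - f ⬝ᵥ φ)).PosSemidef := by
  classical
  set q : (Fin n → ℝ) → ℝ := fun ξ => t + ξ ⬝ᵥ ω + ξ ⬝ᵥ (Ω *ᵥ ξ) with hqdef
  have hΩnn : ∀ x : Fin n → ℝ, 0 ≤ x ⬝ᵥ (Ω *ᵥ x) := by
    intro x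
    have := hΩ.dotProduct_mulVec_nonneg x
    simpa using this
  -- the open convex set to be separated from the origin
  set S : Set ((Fin r → ℝ) × ℝ) :=
    {p | ∃ ξ : Fin n → ℝ, (∀ i, (E *ᵥ ξ) i - f i < p.1 i) ∧ q ξ < p.2} with hSdef
  have hSopen : IsOpen S := by
    have : S = ⋃ ξ : Fin n → ℝ,
        ((⋂ i, {p : (Fin r → ℝ) × ℝ | (E *ᵥ ξ) i - f i < p.1 i}) ∩ {p | q ξ < p.2}) := by
      ext p
      simp only [hSdef, Set.mem_setOf_eq, Set.mem_iUnion, Set.mem_inter_iff, Set.mem_iInter]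
    rw [this]
    refine isOpen_iUnion fun ξ => IsOpen.inter ?_ ?_
    · exact isOpen_iInter_of_finite fun i =>
        isOpen_lt continuous_const ((continuous_apply i).comp continuous_fst)
    · exact isOpen_lt continuous_const continuous_snd
  have hSconv : Convex ℝ S := by
    rintro p ⟨a, ha1, ha2⟩ p' ⟨b, hb1, hb2⟩ lam mu hlam hmu hsum
    obtain rfl : mu = 1 - lam := by linarith
    have hlam1 : lam ≤ 1 := by linarith
    have key : ∀ x y x' y' : ℝ, x < y → x' < y' →
        lam * x + (1 - lam) * x' < lam * y + (1 - lam) * y' := by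
      intro x y x' y' h h'
      rcases eq_or_lt_of_le hlam with h0 | h0
      · rw [← h0]; simpa using h'
      · have h1 : lam * x < lam * y := mul_lt_mul_of_pos_left h h0
        have h2 : (1 - lam) * x' ≤ (1 - lam) * y' := mul_le_mul_of_nonneg_left h'.le hmu
        linarith
    refine ⟨lam • a + (1 - lam) • b, fun i => ?_, ?_⟩
    · have hE : (E *ᵥ (lam • a + (1 - lam) • b)) i
          = lam * (E *ᵥ a) i + (1 - lam) * (E *ᵥ b) i := by
        simp [mulVec_add, mulVec_smul]
      have hp1 : (lam • p + (1 - lam) • p').1 i = lam * p.1 i + (1 - lam) * p'.1 i := by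
        simp [Prod.smul_fst]
      rw [hE, hp1]
      have := key _ _ _ _ (ha1 i) (hb1 i)
      nlinarith [this]
    · have hp2 : (lam • p + (1 - lam) • p').2 = lam * p.2 + (1 - lam) * p'.2 := by
        simp [Prod.smul_snd]
      rw [hp2]
      have hBab := bilin_symm' hΩ.1 b a
      have hd : 0 ≤ a ⬝ᵥ (Ω *ᵥ a) - 2 * (a ⬝ᵥ (Ω *ᵥ b)) + b ⬝ᵥ (Ω *ᵥ b) := by
        have h0 := hΩnn (a - b)
        have hexp : (a - b) ⬝ᵥ (Ω *ᵥ (a - b))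
            = a ⬝ᵥ (Ω *ᵥ a) - 2 * (a ⬝ᵥ (Ω *ᵥ b)) + b ⬝ᵥ (Ω *ᵥ b) := by
          simp only [mulVec_sub, dotProduct_sub, sub_dotProduct]
          rw [hBab]; ring
        linarith [hexp ▸ h0]
      have hq2 : q (lam • a + (1 - lam) • b)
          = t + lam * (a ⬝ᵥ ω) + (1 - lam) * (b ⬝ᵥ ω) + lam * lam * (a ⬝ᵥ (Ω *ᵥ a))
            + 2 * lam * (1 - lam) * (a ⬝ᵥ (Ω *ᵥ b)) + (1 - lam) * (1 - lam) * (b ⬝ᵥ (Ω *ᵥ b)) := by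
        simp only [hqdef, mulVec_add, mulVec_smul, dotProduct_add, add_dotProduct,
          dotProduct_smul, smul_dotProduct, smul_eq_mul]
        rw [hBab]; ring
      have hqa : q a = t + a ⬝ᵥ ω + a ⬝ᵥ (Ω *ᵥ a) := rfl
      have hqb : q b = t + b ⬝ᵥ ω + b ⬝ᵥ (Ω *ᵥ b) := rfl
      have hconv : q (lam • a + (1 - lam) • b) ≤ lam * q a + (1 - lam) * q b := by
        rw [hq2, hqa, hqb]
        nlinarith [mul_nonneg (mul_nonneg hlam hmu) hd]
      have hlt : lam * q a + (1 - lam) * q b < lam * p.2 + (1 - lam) * p'.2 := by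
        rcases eq_or_lt_of_le hlam with h0 | h0
        · rw [← h0]; simpa using hb2
        · have h1 : lam * q a < lam * p.2 := mul_lt_mul_of_pos_left ha2 h0
          have h2 : (1 - lam) * q b ≤ (1 - lam) * p'.2 := mul_le_mul_of_nonneg_left hb2.le hmu
          linarith
      linarith
  have h0S : (0 : (Fin r → ℝ) × ℝ) ∉ S := by
    rintro ⟨ξ, h1, h2⟩
    have hfeas : ∀ i, (E *ᵥ ξ) i ≤ f i := fun i => by
      have := h1 i; simp only [Prod.fst_zero, Pi.zero_apply] at this; linarith
    have := hpos ξ hfeas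
    simp only [Prod.snd_zero] at h2
    exact absurd this (by simpa [hqdef] using not_le.2 h2)
  obtain ⟨g, hg⟩ := geometric_hahn_banach_open_point hSconv hSopen h0S
  have hg0 : ∀ p ∈ S, g p < 0 := fun p hp => by simpa using hg p hp
  set φ0 : Fin r → ℝ := fun i => - g ((Pi.single i 1 : Fin r → ℝ), 0) with hφ0def
  set μ0 : ℝ := - g (0, 1) with hμ0def
  have hglin : ∀ (u : Fin r → ℝ) (α : ℝ), g (u, α) = -(φ0 ⬝ᵥ u) - μ0 * α := by
    intro u α
    have hrep : (u, α) = (∑ i, u i • ((Pi.single i 1 : Fin r → ℝ), (0 : ℝ)))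
        + α • ((0 : Fin r → ℝ), (1 : ℝ)) := by
      refine Prod.ext ?_ ?_
      · simp only [Prod.fst_add, Prod.fst_sum, Prod.smul_fst, Prod.smul_snd, smul_zero,
          Prod.snd_add]
        funext j
        simp [Finset.sum_apply, Pi.single_apply, Finset.sum_ite_eq', mul_comm]
      · simp [Prod.snd_add, Prod.snd_sum, Prod.smul_snd]
    rw [hrep, map_add, map_sum]
    simp only [_root_.map_smul, smul_eq_mul]
    have h1 : φ0 ⬝ᵥ u = ∑ x, -(g ((Pi.single x 1 : Fin r → ℝ), (0:ℝ))) * u x := by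
      simp [hφ0def, dotProduct]
    rw [h1, hμ0def]
    simp only [neg_mul, Finset.sum_neg_distrib, neg_neg]
    rw [Finset.sum_congr rfl fun x (_ : x ∈ Finset.univ) =>
      mul_comm (u x) (g ((Pi.single x 1 : Fin r → ℝ), (0:ℝ)))]
    ring
  have hkey : ∀ p ∈ S, 0 < φ0 ⬝ᵥ p.1 + μ0 * p.2 := by
    intro p hp
    have := hg0 p hp
    rw [show p = (p.1, p.2) from rfl, hglin p.1 p.2] at this
    linarith
  have hq0 : 0 ≤ q ξ₀ := hpos ξ₀ fun i => (hSlater i).le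
  -- μ0 > 0 via the Slater point
  have hμpos : 0 < μ0 := by
    by_contra h
    push_neg at h
    have hmem : ((0 : Fin r → ℝ), q ξ₀ + 1) ∈ S := by
      exact ⟨ξ₀, fun i => by simp [sub_neg]; linarith [hSlater i], by simp⟩
    have := hkey _ hmem
    simp only [dotProduct_zero, zero_dotProduct] at this
    nlinarith [this, mul_nonneg (neg_nonneg.2 h) hq0]
  -- φ0 ≥ 0
  have hφ0nn : ∀ j, 0 ≤ φ0 j := by
    intro j
    by_contra h
    push_neg at h
    set c : ℝ := μ0 * (q ξ₀ + 1) / (-φ0 j) with hc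
    have hcnn : 0 ≤ c := by
      apply div_nonneg
      · positivity
      · linarith
    have hmem : ((Pi.single j c : Fin r → ℝ), q ξ₀ + 1) ∈ S := by
      refine ⟨ξ₀, fun i => ?_, by simp⟩
      have : 0 ≤ (Pi.single j c : Fin r → ℝ) i := by
        rcases eq_or_ne i j with rfl | hne
        · simpa using hcnn
        · simp [Pi.single_apply, hne]
      linarith [hSlater i]
    have hk := hkey _ hmem
    rw [show ((Pi.single j c : Fin r → ℝ), q ξ₀ + 1).1 = (Pi.single j c : Fin r → ℝ) from rfl] at hk
    rw [dotProduct_single] at hk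
    have hφj : φ0 j ≠ 0 := ne_of_lt h
    have hne : -φ0 j ≠ 0 := by intro hh; apply hφj; linarith
    have hcc : φ0 j * c = -(μ0 * (q ξ₀ + 1)) := by
      rw [hc]
      field_simp
    have hk2 : 0 < φ0 j * c + μ0 * (q ξ₀ + 1) := hk
    rw [hcc] at hk2
    linarith
  -- Lagrangian nonnegativity
  have hLag : ∀ ξ : Fin n → ℝ, 0 ≤ φ0 ⬝ᵥ (E *ᵥ ξ - f) + μ0 * q ξ := by
    intro ξ
    by_contra h
    push_neg at h
    set X : ℝ := φ0 ⬝ᵥ (E *ᵥ ξ - f) + μ0 * q ξ with hX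
    set K : ℝ := (∑ i, φ0 i) + μ0 with hK
    have hKpos : 0 < K := by
      have : 0 ≤ ∑ i, φ0 i := Finset.sum_nonneg fun i _ => hφ0nn i
      rw [hK]; linarith
    set ε : ℝ := -X / K with hε
    have hεpos : 0 < ε := by
      rw [hε]; exact div_pos (by linarith) hKpos
    have hmem : (((E *ᵥ ξ - f) + fun _ => ε), q ξ + ε) ∈ S := by
      refine ⟨ξ, fun i => ?_, by simp; linarith⟩
      simp only [Pi.add_apply, Pi.sub_apply]
      linarith
    have hk := hkey _ hmem
    have hdp : φ0 ⬝ᵥ ((E *ᵥ ξ - f) + fun _ => ε) = φ0 ⬝ᵥ (E *ᵥ ξ - f) + (∑ i, φ0 i) * ε := by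
      rw [dotProduct_add]
      congr 1
      simp [dotProduct, Finset.sum_mul]
    rw [show (((E *ᵥ ξ - f) + fun _ => ε), q ξ + ε).1 = ((E *ᵥ ξ - f) + fun _ => ε) from rfl] at hk
    rw [hdp] at hk
    have hεK : ε * K = -X := by
      rw [hε]; field_simp
    rw [hK] at hεK
    have hk2 : 0 < φ0 ⬝ᵥ (E *ᵥ ξ - f) + (∑ i, φ0 i) * ε + μ0 * (q ξ + ε) := hk
    linarith [hk2, hεK]
    -- normalize the multiplier
  set φ : Fin r → ℝ := fun i => φ0 i / μ0 with hφdef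
  have hφnn : ∀ i, 0 ≤ φ i := fun i => div_nonneg (hφ0nn i) hμpos.le
  have hsc : ∀ u : Fin r → ℝ, φ0 ⬝ᵥ u = μ0 * (φ ⬝ᵥ u) := by
    intro u
    simp only [hφdef, dotProduct, Finset.mul_sum]
    refine Finset.sum_congr rfl fun i _ => ?_
    field_simp
  have h2 : ∀ ξ : Fin n → ℝ, φ ⬝ᵥ (E *ᵥ ξ) = ξ ⬝ᵥ (Eᵀ *ᵥ φ) := by
    intro ξ
    rw [dotProduct_mulVec, ← mulVec_transpose, dotProduct_comm]
  have hLag' : ∀ ξ : Fin n → ℝ,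
      0 ≤ (t - f ⬝ᵥ φ) + ξ ⬝ᵥ (ω + Eᵀ *ᵥ φ) + ξ ⬝ᵥ (Ω *ᵥ ξ) := by
    intro ξ
    have h0 := hLag ξ
    rw [dotProduct_sub, hsc, hsc] at h0
    have h1 : 0 ≤ (φ ⬝ᵥ (E *ᵥ ξ) - φ ⬝ᵥ f) + q ξ := by
      by_contra hlt
      push_neg at hlt
      have := mul_neg_of_pos_of_neg hμpos hlt
      nlinarith [this, h0]
    have hq : q ξ = t + ξ ⬝ᵥ ω + ξ ⬝ᵥ (Ω *ᵥ ξ) := rfl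
    rw [hq, h2 ξ, dotProduct_comm φ f] at h1
    rw [dotProduct_add]
    linarith
  refine ⟨φ, hφnn, posSemidef_iff_dotProduct_mulVec.mpr ⟨?_, ?_⟩⟩
  · -- Hermitian
    have hsym : ∀ i j, Ω j i = Ω i j := fun i j => by
      simpa using congrFun (congrFun hΩ.1.symm j) i
    show _ᴴ = _
    ext i j
    rcases i with i | i <;> rcases j with j | j <;>
      simp [conjTranspose_apply, fromBlocks_apply₁₁, fromBlocks_apply₁₂,
        fromBlocks_apply₂₁, fromBlocks_apply₂₂, hsym]
  · -- quadratic form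
    intro x
    have hstar : star x = x := by
      funext i; simp
    rw [hstar, quad_fromBlocks' Ω (ω + Eᵀ *ᵥ φ) (t - f ⬝ᵥ φ) x]
    set y : Fin n → ℝ := fun i => x (Sum.inl i) with hy
    set s : ℝ := x (Sum.inr ()) with hs
    rcases eq_or_ne s 0 with hs0 | hs0
    · rw [hs0]
      simpa using hΩnn y
    · have hL := hLag' (s⁻¹ • y)
      rw [smul_dotProduct, mulVec_smul, dotProduct_smul, smul_dotProduct, smul_eq_mul,
        smul_eq_mul, smul_eq_mul] at hL
      have hs2 : 0 < s ^ 2 := by positivity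
      have hmul := mul_nonneg hs2.le hL
      have hid : s ^ 2 * ((t - f ⬝ᵥ φ) + s⁻¹ * (y ⬝ᵥ (ω + Eᵀ *ᵥ φ)) + s⁻¹ * (s⁻¹ * (y ⬝ᵥ (Ω *ᵥ y))))
          = y ⬝ᵥ (Ω *ᵥ y) + s * (y ⬝ᵥ (ω + Eᵀ *ᵥ φ)) + (t - f ⬝ᵥ φ) * s ^ 2 := by
        field_simp
        ring
      rw [hid] at hmul
      linarith
end

section
/- Let W ⊆ ℝⁿ be a nonempty compact set, let 𝒟 be a nonempty convex set of Borel probability measures on W that is compact in the topology of weak convergence, let L : ℝⁿ → ℝ be continuous, and let ε ∈ (0,1). Then sup_{P∈𝒟} inf_{β∈ℝ} { β + ε⁻¹ ∫ (L(ξ) − β)⁺ dP(ξ) } = inf_{β∈ℝ} sup_{P∈𝒟} { β + ε⁻¹ ∫ (L(ξ) − β)⁺ dP(ξ) }, where (x)⁺ = max(x,0). -/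
open MeasureTheory ENNReal

namespace CvarAux

section Integrals
variable {α : Type*} [MeasurableSpace α] [TopologicalSpace α] [OpensMeasurableSpace α]
variable {μ : Measure α} [IsProbabilityMeasure μ] {L : α → ℝ} (hL : Continuous L)
include hL
set_option linter.unusedSectionVars false

lemma integrable_pos {M : ℝ} (hM : ∀ᵐ ξ ∂μ, L ξ ≤ M) (β : ℝ) :
    Integrable (fun ξ => max (L ξ - β) 0) μ := by
  refine (integrable_const (max (M - β) 0)).mono'
    (((hL.sub continuous_const).max continuous_const).aestronglyMeasurable) ?_
  filter_upwards [hM] with ξ h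
  rw [Real.norm_eq_abs, abs_of_nonneg (le_max_right _ _)]
  exact max_le_max (sub_le_sub_right h β) le_rfl

lemma integral_pos_le {M : ℝ} (hM : ∀ᵐ ξ ∂μ, L ξ ≤ M) (β : ℝ) :
    ∫ ξ, max (L ξ - β) 0 ∂μ ≤ max (M - β) 0 := by
  calc ∫ ξ, max (L ξ - β) 0 ∂μ ≤ ∫ _ξ, max (M - β) 0 ∂μ := by
        refine integral_mono_ae (integrable_pos hL hM β) (integrable_const _) ?_
        filter_upwards [hM] with ξ h
        exact max_le_max (sub_le_sub_right h β) le_rfl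
    _ = max (M - β) 0 := by simp

lemma le_integral_pos {M m : ℝ} (hM : ∀ᵐ ξ ∂μ, L ξ ≤ M) (hm : ∀ᵐ ξ ∂μ, m ≤ L ξ) (β : ℝ) :
    max (m - β) 0 ≤ ∫ ξ, max (L ξ - β) 0 ∂μ := by
  calc max (m - β) 0 = ∫ _ξ, max (m - β) 0 ∂μ := by simp
    _ ≤ ∫ ξ, max (L ξ - β) 0 ∂μ := by
        refine integral_mono_ae (integrable_const _) (integrable_pos hL hM β) ?_
        filter_upwards [hm] with ξ h
        exact max_le_max (sub_le_sub_right h β) le_rfl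

lemma integral_pos_top {M : ℝ} (hM : ∀ᵐ ξ ∂μ, L ξ ≤ M) {β : ℝ} (hβ : M ≤ β) :
    ∫ ξ, max (L ξ - β) 0 ∂μ = 0 := by
  rw [show (0:ℝ) = ∫ _ξ, (0:ℝ) ∂μ by simp]
  refine integral_congr_ae ?_
  filter_upwards [hM] with ξ h
  simp [max_eq_right, sub_nonpos.2 (h.trans hβ)]

lemma integral_pos_lipschitz {M : ℝ} (hM : ∀ᵐ ξ ∂μ, L ξ ≤ M) (β₁ β₂ : ℝ) :
    |(∫ ξ, max (L ξ - β₁) 0 ∂μ) - ∫ ξ, max (L ξ - β₂) 0 ∂μ| ≤ |β₁ - β₂| := by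
  rw [← integral_sub (integrable_pos hL hM β₁) (integrable_pos hL hM β₂)]
  calc |∫ ξ, (max (L ξ - β₁) 0 - max (L ξ - β₂) 0) ∂μ|
      ≤ ∫ ξ, |max (L ξ - β₁) 0 - max (L ξ - β₂) 0| ∂μ := by
        simpa [Real.norm_eq_abs] using norm_integral_le_integral_norm (μ := μ)
          fun ξ => max (L ξ - β₁) 0 - max (L ξ - β₂) 0
    _ ≤ ∫ _ξ, |β₁ - β₂| ∂μ := by
        refine integral_mono_ae ((integrable_pos hL hM β₁).sub
          (integrable_pos hL hM β₂)).abs (integrable_const _) ?_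
        filter_upwards with ξ
        calc |max (L ξ - β₁) 0 - max (L ξ - β₂) 0| ≤ |(L ξ - β₁) - (L ξ - β₂)| :=
            abs_max_sub_max_le_abs _ _ _
          _ = |β₂ - β₁| := by ring_nf
          _ = |β₁ - β₂| := abs_sub_comm _ _
    _ = |β₁ - β₂| := by simp

lemma integral_pos_convex {M : ℝ} (hM : ∀ᵐ ξ ∂μ, L ξ ≤ M) {a b : ℝ} (ha : 0 ≤ a) (hb : 0 ≤ b)
    (hab : a + b = 1) (β₁ β₂ : ℝ) :
    ∫ ξ, max (L ξ - (a * β₁ + b * β₂)) 0 ∂μ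
      ≤ a * (∫ ξ, max (L ξ - β₁) 0 ∂μ) + b * ∫ ξ, max (L ξ - β₂) 0 ∂μ := by
  have key : ∀ ξ, max (L ξ - (a * β₁ + b * β₂)) 0
      ≤ a * max (L ξ - β₁) 0 + b * max (L ξ - β₂) 0 := by
    intro ξ
    refine max_le ?_ (by positivity)
    have h1 : L ξ - (a * β₁ + b * β₂) = a * (L ξ - β₁) + b * (L ξ - β₂) := by
      have : a * L ξ + b * L ξ = L ξ := by rw [← add_mul, hab, one_mul]
      ring_nf
      nlinarith [hab]
    rw [h1]
    gcongr <;> exact le_max_left _ _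
  calc ∫ ξ, max (L ξ - (a * β₁ + b * β₂)) 0 ∂μ
      ≤ ∫ ξ, (a * max (L ξ - β₁) 0 + b * max (L ξ - β₂) 0) ∂μ := by
        refine integral_mono_ae (integrable_pos hL hM _)
          (((integrable_pos hL hM β₁).const_mul a).add
            ((integrable_pos hL hM β₂).const_mul b)) ?_
        filter_upwards with ξ using key ξ
    _ = a * (∫ ξ, max (L ξ - β₁) 0 ∂μ) + b * ∫ ξ, max (L ξ - β₂) 0 ∂μ := by
        rw [integral_add ((integrable_pos hL hM β₁).const_mul a)
          ((integrable_pos hL hM β₂).const_mul b), integral_const_mul, integral_const_mul]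

end Integrals

lemma minimax_abstract {ι : Type*} (𝒟 : Set ι) (h𝒟ne : 𝒟.Nonempty)
    (f : ℝ → ι → ℝ) (m M : ℝ) (hmM : m ≤ M)
    (hm : ∀ P ∈ 𝒟, ∀ β : ℝ, m ≤ f β P)
    (hβle : ∀ P ∈ 𝒟, ∀ β : ℝ, β ≤ f β P)
    (htop : ∀ P ∈ 𝒟, ∀ β : ℝ, M ≤ β → f β P = β)
    (hcoer : ∃ B : ℝ, B ≤ M ∧ ∀ P ∈ 𝒟, ∀ β : ℝ, β ≤ B → M < f β P)
    (hub : ∀ β : ℝ, ∃ C : ℝ, ∀ P ∈ 𝒟, f β P ≤ C)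
    (hconv : ∀ P ∈ 𝒟, ConvexOn ℝ Set.univ (fun β => f β P))
    (hcont : ∀ P ∈ 𝒟, Continuous (fun β => f β P))
    (hmix : ∀ P ∈ 𝒟, ∀ Q ∈ 𝒟, ∀ t : ℝ, 0 ≤ t → t ≤ 1 →
      ∃ R ∈ 𝒟, ∀ β : ℝ, f β R = t * f β P + (1 - t) * f β Q) :
    (⨆ P, ⨆ _ : P ∈ 𝒟, ⨅ β : ℝ, f β P) = ⨅ β : ℝ, ⨆ P, ⨆ _ : P ∈ 𝒟, f β P := by
  classical
  obtain ⟨P₀, hP₀⟩ := h𝒟ne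
  haveI : Nonempty ι := ⟨P₀⟩
  haveI : Nonempty 𝒟 := ⟨⟨P₀, hP₀⟩⟩
  obtain ⟨B, hBM, hB⟩ := hcoer
  -- the inner infimum
  set g : ι → ℝ := fun P => ⨅ β : ℝ, f β P with hg
  have hbdd_f : ∀ P ∈ 𝒟, BddBelow (Set.range fun β => f β P) :=
    fun P hP => ⟨m, by rintro x ⟨β, rfl⟩; exact hm P hP β⟩
  have hgm : ∀ P ∈ 𝒟, m ≤ g P := fun P hP => le_ciInf fun β => hm P hP β
  have hgM : ∀ P ∈ 𝒟, g P ≤ M := fun P hP =>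
    (ciInf_le (hbdd_f P hP) M).trans_eq (htop P hP M le_rfl)
  -- the candidate value
  set c : ℝ := ⨆ P : 𝒟, g ↑P with hc
  have hbddc : BddAbove (Set.range fun P : 𝒟 => g ↑P) :=
    ⟨M, by rintro x ⟨P, rfl⟩; exact hgM P P.2⟩
  have hgc : ∀ P ∈ 𝒟, g P ≤ c := fun P hP => le_ciSup hbddc ⟨P, hP⟩
  have hmc : m ≤ c := (hgm P₀ hP₀).trans (hgc P₀ hP₀)
  have hcM : c ≤ M := ciSup_le fun P => hgM P P.2
  -- the sublevel sets
  set S : ι → Set ℝ := fun P => {β | f β P ≤ c} with hS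
  have hSclosed : ∀ P ∈ 𝒟, IsClosed (S P) :=
    fun P hP => isClosed_Iic.preimage (hcont P hP)
  have hSsub : ∀ P ∈ 𝒟, S P ⊆ Set.Icc B c := by
    intro P hP β hβ
    refine ⟨?_, le_trans (hβle P hP β) hβ⟩
    by_contra h
    exact absurd hβ (not_le.2 (lt_of_le_of_lt hcM (hB P hP β (le_of_not_ge h))))
  have hSconv : ∀ P ∈ 𝒟, ∀ β₁ ∈ S P, ∀ β₂ ∈ S P, ∀ β ∈ Set.Icc β₁ β₂, β ∈ S P := by
    intro P hP β₁ h₁ β₂ h₂ β hβ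
    have hle : β₁ ≤ β₂ := hβ.1.trans hβ.2
    have := (hconv P hP).le_on_segment (Set.mem_univ β₁) (Set.mem_univ β₂)
      (by rw [segment_eq_Icc hle]; exact hβ)
    exact le_trans this (max_le h₁ h₂)
  have hSne : ∀ P ∈ 𝒟, (S P).Nonempty := by
    intro P hP
    obtain ⟨β₀, hβ₀K, hβ₀⟩ := isCompact_Icc.exists_isMinOn (Set.nonempty_Icc.2 hBM)
      (hcont P hP).continuousOn
    refine ⟨β₀, ?_⟩
    have hβ₀M : f β₀ P ≤ M := (hβ₀ (Set.mem_Icc.2 ⟨hBM, le_rfl⟩)).trans_eq (htop P hP M le_rfl)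
    have hglobal : ∀ β : ℝ, f β₀ P ≤ f β P := by
      intro β
      by_cases h1 : β ∈ Set.Icc B M
      · exact hβ₀ h1
      · rcases not_and_or.1 (Set.mem_Icc.not.1 h1) with h2 | h2
        · exact hβ₀M.trans (hB P hP β (le_of_not_ge h2)).le
        · have h3 : M ≤ β := (not_le.1 h2).le
          rw [htop P hP β h3]
          exact hβ₀M.trans h3
    have h4 : f β₀ P ≤ g P := le_ciInf hglobal
    exact h4.trans (hgc P hP)
  have hSbddB : ∀ P ∈ 𝒟, BddBelow (S P) :=
    fun P hP => ⟨B, fun β hβ => (hSsub P hP hβ).1⟩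
  have hSbddA : ∀ P ∈ 𝒟, BddAbove (S P) :=
    fun P hP => ⟨c, fun β hβ => (hSsub P hP hβ).2⟩
  have hInfMem : ∀ P ∈ 𝒟, sInf (S P) ∈ S P :=
    fun P hP => (hSclosed P hP).csInf_mem (hSne P hP) (hSbddB P hP)
  have hSupMem : ∀ P ∈ 𝒟, sSup (S P) ∈ S P :=
    fun P hP => (hSclosed P hP).csSup_mem (hSne P hP) (hSbddA P hP)
  -- pairwise intersection: the connectedness argument
  have hdisj : ∀ P ∈ 𝒟, ∀ Q ∈ 𝒟, sSup (S P) < sInf (S Q) → False := by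
    intro P hP Q hQ hlt
    set bP := sSup (S P)
    set aQ := sInf (S Q)
    set β₀ := (bP + aQ) / 2 with hβ₀def
    have hbPβ₀ : bP < β₀ := by rw [hβ₀def]; linarith
    have hβ₀aQ : β₀ < aQ := by rw [hβ₀def]; linarith
    have hfP : c < f β₀ P := by
      by_contra h
      exact absurd (le_csSup (hSbddA P hP) (not_lt.1 h)) (not_le.2 hbPβ₀)
    have hfQ : c < f β₀ Q := by
      by_contra h
      exact absurd (csInf_le (hSbddB Q hQ) (not_lt.1 h)) (not_le.2 hβ₀aQ)
    have hBβ₀ : B ≤ β₀ := le_trans ((hSsub P hP (hSupMem P hP)).1) hbPβ₀.le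
    have hβ₀c : β₀ ≤ c := le_trans hβ₀aQ.le ((hSsub Q hQ (hInfMem Q hQ)).2)
    -- the two closed pieces of [0,1]
    set G : ℝ → ℝ → ℝ := fun t β => t * f β P + (1 - t) * f β Q with hG
    have hGcont : Continuous fun p : ℝ × ℝ => G p.1 p.2 := by
      apply Continuous.add
      · exact (continuous_fst).mul ((hcont P hP).comp continuous_snd)
      · exact (continuous_const.sub continuous_fst).mul ((hcont Q hQ).comp continuous_snd)
    set TL : Set ℝ := {t | t ∈ Set.Icc (0:ℝ) 1 ∧ ∃ β ∈ Set.Icc B β₀, G t β ≤ c} with hTL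
    set TR : Set ℝ := {t | t ∈ Set.Icc (0:ℝ) 1 ∧ ∃ β ∈ Set.Icc β₀ c, G t β ≤ c} with hTR
    have hclosed : ∀ (K : Set ℝ), IsCompact K →
        IsClosed {t | t ∈ Set.Icc (0:ℝ) 1 ∧ ∃ β ∈ K, G t β ≤ c} := by
      intro K hK
      refine IsSeqClosed.isClosed ?_
      intro x p hx hxp
      choose hx01 β hβK hβc using hx
      obtain ⟨βl, hβlK, φ, hφ, hφtend⟩ := hK.tendsto_subseq hβK
      refine ⟨isClosed_Icc.isSeqClosed hx01 hxp, βl, hβlK, ?_⟩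
      have htend : Filter.Tendsto (fun k => G (x (φ k)) (β (φ k))) Filter.atTop
          (nhds (G p βl)) := by
        have h1 : Filter.Tendsto (fun k => (x (φ k), β (φ k))) Filter.atTop
            (nhds (p, βl)) :=
          ((hxp.comp hφ.tendsto_atTop).prodMk_nhds hφtend)
        exact (hGcont.tendsto _).comp h1
      exact le_of_tendsto htend (Filter.Eventually.of_forall fun k => hβc (φ k))
    have hTLclosed : IsClosed TL := hclosed _ isCompact_Icc
    have hTRclosed : IsClosed TR := hclosed _ isCompact_Icc
    have hcover : Set.Icc (0:ℝ) 1 ⊆ TL ∪ TR := by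
      intro t ht
      obtain ⟨R, hR, hfR⟩ := hmix P hP Q hQ t ht.1 ht.2
      obtain ⟨β, hβ⟩ := hSne R hR
      have hβc : G t β ≤ c := by
        show t * f β P + (1 - t) * f β Q ≤ c
        rw [← hfR β]; exact hβ
      have hβBc := hSsub R hR hβ
      rcases le_total β β₀ with h | h
      · exact Or.inl ⟨ht, β, ⟨hβBc.1, h⟩, hβc⟩
      · exact Or.inr ⟨ht, β, ⟨h, hβBc.2⟩, hβc⟩
    have h1TL : (1:ℝ) ∈ TL := by
      refine ⟨⟨zero_le_one, le_rfl⟩, bP, ⟨(hSsub P hP (hSupMem P hP)).1, hbPβ₀.le⟩, ?_⟩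
      have : G 1 bP = f bP P := by rw [hG]; ring
      rw [this]; exact hSupMem P hP
    have h0TR : (0:ℝ) ∈ TR := by
      refine ⟨⟨le_rfl, zero_le_one⟩, aQ, ⟨hβ₀aQ.le, (hSsub Q hQ (hInfMem Q hQ)).2⟩, ?_⟩
      have : G 0 aQ = f aQ Q := by rw [hG]; ring
      rw [this]; exact hInfMem Q hQ
    have hdisjoint : ∀ t ∈ Set.Icc (0:ℝ) 1, t ∈ TL → t ∈ TR → False := by
      intro t ht ⟨_, β₁, hβ₁, hc₁⟩ ⟨_, β₂, hβ₂, hc₂⟩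
      have hβ₁β₂ : β₁ ≤ β₂ := le_trans hβ₁.2 hβ₂.1
      -- G t · is convex
      have hGconv : ConvexOn ℝ Set.univ (fun β => G t β) := by
        have h1 := ((hconv P hP).smul ht.1)
        have h2 := ((hconv Q hQ).smul (by linarith [ht.2] : (0:ℝ) ≤ 1 - t))
        have := h1.add h2
        simpa [hG, smul_eq_mul, Pi.add_def] using this
      have hβ₀mem : β₀ ∈ Set.Icc β₁ β₂ := ⟨hβ₁.2, hβ₂.1⟩
      have hGβ₀ : G t β₀ ≤ c := by
        have := hGconv.le_on_segment (Set.mem_univ β₁) (Set.mem_univ β₂)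
          (by rw [segment_eq_Icc hβ₁β₂]; exact hβ₀mem)
        exact this.trans (max_le hc₁ hc₂)
      -- but G t β₀ > c
      have hgt : c < G t β₀ := by
        show c < t * f β₀ P + (1 - t) * f β₀ Q
        rcases lt_or_eq_of_le ht.1 with h0 | h0
        · have e1 : 0 < t * (f β₀ P - c) := mul_pos h0 (sub_pos.2 hfP)
          have e2 : 0 ≤ (1 - t) * (f β₀ Q - c) :=
            mul_nonneg (by linarith [ht.2]) (sub_nonneg.2 hfQ.le)
          nlinarith [e1, e2]
        · rw [← h0]; simpa using hfQ
      exact absurd hGβ₀ (not_le.2 hgt)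
    -- connectedness of [0,1] gives a contradiction
    obtain ⟨t, htmem, htL, htR⟩ := (isPreconnected_closed_iff.1 isPreconnected_Icc)
      TL TR hTLclosed hTRclosed hcover ⟨1, Set.right_mem_Icc.2 zero_le_one, h1TL⟩
      ⟨0, Set.left_mem_Icc.2 zero_le_one, h0TR⟩
    exact hdisjoint t htmem htL htR
  -- pairwise intersections are nonempty
  have hpair : ∀ P ∈ 𝒟, ∀ Q ∈ 𝒟, ∃ γ, γ ∈ S P ∧ γ ∈ S Q := by
    intro P hP Q hQ
    by_cases h1 : sSup (S P) < sInf (S Q)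
    · exact absurd h1 (fun h => hdisj P hP Q hQ h)
    by_cases h2 : sSup (S Q) < sInf (S P)
    · exact absurd h2 (fun h => hdisj Q hQ P hP h)
    push_neg at h1 h2
    refine ⟨max (sInf (S P)) (sInf (S Q)), ?_, ?_⟩
    · refine hSconv P hP _ (hInfMem P hP) _ (hSupMem P hP) _ ⟨le_max_left _ _, ?_⟩
      exact max_le (csInf_le_csSup (hSne P hP) (hSbddB P hP) (hSbddA P hP)) h1
    · refine hSconv Q hQ _ (hInfMem Q hQ) _ (hSupMem Q hQ) _ ⟨le_max_right _ _, ?_⟩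
      exact max_le h2 (csInf_le_csSup (hSne Q hQ) (hSbddB Q hQ) (hSbddA Q hQ))
  -- the saddle point β*
  set A : Set ℝ := (fun P => sInf (S P)) '' 𝒟 with hA
  have hAne : A.Nonempty := ⟨_, ⟨P₀, hP₀, rfl⟩⟩
  have hAbdd : BddAbove A := by
    refine ⟨c, ?_⟩
    rintro x ⟨P, hP, rfl⟩
    exact (hSsub P hP (hInfMem P hP)).2
  set βs : ℝ := sSup A with hβs
  have hβsS : ∀ P ∈ 𝒟, βs ∈ S P := by
    intro P hP
    refine hSconv P hP _ (hInfMem P hP) _ (hSupMem P hP) _ ⟨?_, ?_⟩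
    · exact le_csSup hAbdd ⟨P, hP, rfl⟩
    · refine csSup_le hAne ?_
      rintro x ⟨Q, hQ, rfl⟩
      obtain ⟨γ, hγP, hγQ⟩ := hpair Q hQ P hP
      exact le_trans (csInf_le (hSbddB Q hQ) hγP) (le_csSup (hSbddA P hP) hγQ)
  -- assemble
  have hubv : ∀ β : ℝ, BddAbove (Set.range fun P : ι => ⨆ _ : P ∈ 𝒟, f β P) := by
    intro β
    obtain ⟨C, hC⟩ := hub β
    refine ⟨max C 0, ?_⟩
    rintro x ⟨P, rfl⟩
    dsimp only
    by_cases hP : P ∈ 𝒟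
    · haveI : Nonempty (P ∈ 𝒟) := ⟨hP⟩
      rw [ciSup_const]
      exact le_max_of_le_left (hC P hP)
    · haveI : IsEmpty (P ∈ 𝒟) := ⟨hP⟩
      rw [Real.iSup_of_isEmpty]
      exact le_max_right _ _
  have hwbdd : BddAbove (Set.range fun P : ι => ⨆ _ : P ∈ 𝒟, g P) := by
    refine ⟨max M 0, ?_⟩
    rintro x ⟨P, rfl⟩
    dsimp only
    by_cases hP : P ∈ 𝒟
    · haveI : Nonempty (P ∈ 𝒟) := ⟨hP⟩
      rw [ciSup_const]
      exact le_max_of_le_left (hgM P hP)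
    · haveI : IsEmpty (P ∈ 𝒟) := ⟨hP⟩
      rw [Real.iSup_of_isEmpty]
      exact le_max_right _ _
  have hsm : ∀ β : ℝ, m ≤ ⨆ P, ⨆ _ : P ∈ 𝒟, f β P := by
    intro β
    refine le_trans (hm P₀ hP₀ β) ?_
    have : f β P₀ = ⨆ _ : P₀ ∈ 𝒟, f β P₀ := by
      haveI : Nonempty (P₀ ∈ 𝒟) := ⟨hP₀⟩
      rw [ciSup_const]
    rw [this]
    exact le_ciSup (hubv β) P₀
  refine le_antisymm ?_ ?_
  · -- sup inf ≤ inf sup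
    refine le_ciInf fun β => ?_
    refine ciSup_le fun P => ?_
    by_cases hP : P ∈ 𝒟
    · haveI : Nonempty (P ∈ 𝒟) := ⟨hP⟩
      rw [ciSup_const]
      refine le_trans (ciInf_le (hbdd_f P hP) β) ?_
      have : f β P = ⨆ _ : P ∈ 𝒟, f β P := by rw [ciSup_const]
      rw [this]
      exact le_ciSup (hubv β) P
    · haveI : IsEmpty (P ∈ 𝒟) := ⟨hP⟩
      rw [Real.iSup_of_isEmpty]
      have h0 : (0:ℝ) = ⨆ _ : P ∈ 𝒟, f β P := by rw [Real.iSup_of_isEmpty]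
      rw [h0]
      exact le_ciSup (hubv β) P
  · -- inf sup ≤ sup inf
    have hLHSc : c ≤ ⨆ P, ⨆ _ : P ∈ 𝒟, g P := by
      refine ciSup_le fun P => ?_
      have : g ↑P = ⨆ _ : (P : ι) ∈ 𝒟, g ↑P := by
        haveI : Nonempty ((P : ι) ∈ 𝒟) := ⟨P.2⟩
        rw [ciSup_const]
      rw [this]
      exact le_ciSup hwbdd (P : ι)
    refine le_trans (ciInf_le ⟨m, fun x ⟨β, hβ⟩ => hβ ▸ hsm β⟩ βs) ?_
    refine ciSup_le fun P => ?_
    by_cases hP : P ∈ 𝒟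
    · haveI : Nonempty (P ∈ 𝒟) := ⟨hP⟩
      rw [ciSup_const]
      exact le_trans (hβsS P hP) hLHSc
    · haveI : IsEmpty (P ∈ 𝒟) := ⟨hP⟩
      rw [Real.iSup_of_isEmpty]
      -- 0 ≤ sup: use the P itself contributing 0
      have : (0:ℝ) = ⨆ _ : P ∈ 𝒟, g P := by rw [Real.iSup_of_isEmpty]
      rw [this]
      exact le_ciSup hwbdd P

end CvarAux

open CvarAux

/-- the stochastic minimax exchange (B.5): for a convex set `𝒟` of probability
measures on a compact set `W`, compact in the topology of weak convergence, the sup over `𝒟`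
and the inf over `β` in the worst-case CVaR can be interchanged. -/
theorem cvar_minimax_exchange {n : ℕ}
    (W : Set (Fin n → ℝ)) (hWc : IsCompact W)
    (𝒟 : Set (ProbabilityMeasure (Fin n → ℝ)))
    (h𝒟ne : 𝒟.Nonempty)
    (h𝒟supp : ∀ P ∈ 𝒟, (P : Measure (Fin n → ℝ)) W = 1)
    (h𝒟conv : ∀ P ∈ 𝒟, ∀ Q ∈ 𝒟, ∀ t : ℝ≥0∞, t ≤ 1 →
      ∃ R ∈ 𝒟, (R : Measure (Fin n → ℝ))
        = t • (P : Measure (Fin n → ℝ)) + (1 - t) • (Q : Measure (Fin n → ℝ)))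
    (h𝒟comp : IsCompact 𝒟)
    (L : (Fin n → ℝ) → ℝ) (hL : Continuous L)
    (ε : ℝ) (hε : ε ∈ Set.Ioo (0 : ℝ) 1) :
    (⨆ P ∈ 𝒟, ⨅ β : ℝ,
        (β + ε⁻¹ * ∫ ξ, max (L ξ - β) 0 ∂(P : Measure (Fin n → ℝ))))
      = ⨅ β : ℝ, ⨆ P ∈ 𝒟,
        (β + ε⁻¹ * ∫ ξ, max (L ξ - β) 0 ∂(P : Measure (Fin n → ℝ))) := by
  obtain ⟨hε0, hε1⟩ := hε
  obtain ⟨P₀, hP₀⟩ := h𝒟ne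
  have hεinv : 1 < ε⁻¹ := by
    have h1 : ε * ε⁻¹ = 1 := mul_inv_cancel₀ (ne_of_gt hε0)
    nlinarith
  have hWne : W.Nonempty := by
    rcases Set.eq_empty_or_nonempty W with h | h
    · exfalso
      have h2 := h𝒟supp P₀ hP₀
      rw [h] at h2
      simp at h2
    · exact h
  obtain ⟨ξM, hξMW, hξM⟩ := hWc.exists_isMaxOn hWne hL.continuousOn
  obtain ⟨ξm, hξmW, hξm⟩ := hWc.exists_isMinOn hWne hL.continuousOn
  set M : ℝ := L ξM with hMdef
  set m : ℝ := L ξm with hmdef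
  have hmM : m ≤ M := isMaxOn_iff.1 hξM ξm hξmW
  have hae : ∀ P ∈ 𝒟, ∀ᵐ ξ ∂(P : Measure (Fin n → ℝ)), ξ ∈ W := by
    intro P hP
    have h1 : (P : Measure (Fin n → ℝ)) Wᶜ = 0 := by
      rw [measure_compl hWc.isClosed.measurableSet (measure_ne_top _ _), h𝒟supp P hP,
        measure_univ]
      simp
    exact MeasureTheory.ae_iff.2 h1
  have haeM : ∀ P ∈ 𝒟, ∀ᵐ ξ ∂(P : Measure (Fin n → ℝ)), L ξ ≤ M :=
    fun P hP => (hae P hP).mono fun ξ h => isMaxOn_iff.1 hξM ξ h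
  have haem : ∀ P ∈ 𝒟, ∀ᵐ ξ ∂(P : Measure (Fin n → ℝ)), m ≤ L ξ :=
    fun P hP => (hae P hP).mono fun ξ h => isMinOn_iff.1 hξm ξ h
  have key := minimax_abstract 𝒟 ⟨P₀, hP₀⟩
    (fun β P => β + ε⁻¹ * ∫ ξ, max (L ξ - β) 0 ∂(P : Measure (Fin n → ℝ))) m M hmM
    ?_ ?_ ?_ ?_ ?_ ?_ ?_ ?_
  · exact key
  · -- hm : m ≤ f β P
    intro P hP β
    have hI := le_integral_pos hL (haeM P hP) (haem P hP) β
    have hI0 : (0:ℝ) ≤ ∫ ξ, max (L ξ - β) 0 ∂(P : Measure (Fin n → ℝ)) :=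
      le_trans (le_max_right _ _) hI
    rcases le_total m β with h | h
    · nlinarith
    · have h2 : max (m - β) 0 = m - β := max_eq_left (by linarith)
      rw [h2] at hI
      nlinarith
  · -- hβle
    intro P hP β
    have hI0 : (0:ℝ) ≤ ∫ ξ, max (L ξ - β) 0 ∂(P : Measure (Fin n → ℝ)) :=
      integral_nonneg fun ξ => le_max_right _ _
    nlinarith
  · -- htop
    intro P hP β hβ
    rw [integral_pos_top hL (haeM P hP) hβ]
    ring
  · -- hcoer
    refine ⟨m - (M - m + 1) / (ε⁻¹ - 1), ?_, ?_⟩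
    · have h1 : (0:ℝ) < (M - m + 1) / (ε⁻¹ - 1) :=
        div_pos (by linarith) (by linarith)
      linarith
    · intro P hP β hβ
      have hβm : β ≤ m := by
        have h1 : (0:ℝ) < (M - m + 1) / (ε⁻¹ - 1) :=
          div_pos (by linarith) (by linarith)
        linarith
      have hI := le_integral_pos hL (haeM P hP) (haem P hP) β
      have h2 : max (m - β) 0 = m - β := max_eq_left (by linarith)
      rw [h2] at hI
      have h3 : (ε⁻¹ - 1) * ((M - m + 1) / (ε⁻¹ - 1)) = M - m + 1 :=
        mul_div_cancel₀ _ (by linarith)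
      have h4 : (ε⁻¹ - 1) * (m - β) ≥ M - m + 1 := by
        have h5 : m - β ≥ (M - m + 1) / (ε⁻¹ - 1) := by linarith
        nlinarith
      nlinarith
  · -- hub
    intro β
    refine ⟨β + ε⁻¹ * max (M - β) 0, ?_⟩
    intro P hP
    have hI := integral_pos_le hL (haeM P hP) β
    nlinarith
  · -- hconv
    intro P hP
    have hIconv : ConvexOn ℝ Set.univ
        (fun β => ∫ ξ, max (L ξ - β) 0 ∂(P : Measure (Fin n → ℝ))) := by
      refine ⟨convex_univ, ?_⟩
      intro x _ y _ a b ha hb hab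
      simpa [smul_eq_mul] using integral_pos_convex hL (haeM P hP) ha hb hab x y
    have h1 : ConvexOn ℝ Set.univ (fun β : ℝ => β) := convexOn_id convex_univ
    have h2 := h1.add (hIconv.smul (inv_nonneg.2 hε0.le))
    simpa [smul_eq_mul, Pi.add_def] using h2
  · -- hcont
    intro P hP
    have hlip : LipschitzWith 1
        (fun β => ∫ ξ, max (L ξ - β) 0 ∂(P : Measure (Fin n → ℝ))) := by
      refine LipschitzWith.of_dist_le_mul ?_
      intro β₁ β₂
      rw [Real.dist_eq, Real.dist_eq, NNReal.coe_one, one_mul]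
      exact integral_pos_lipschitz hL (haeM P hP) β₁ β₂
    exact continuous_id.add (continuous_const.mul hlip.continuous)
  · -- hmix
    intro P hP Q hQ t ht0 ht1
    obtain ⟨R, hR, hRmeas⟩ := h𝒟conv P hP Q hQ (ENNReal.ofReal t)
      (ENNReal.ofReal_le_one.2 ht1)
    refine ⟨R, hR, fun β => ?_⟩
    have hiP := integrable_pos hL (haeM P hP) β
    have hiQ := integrable_pos hL (haeM Q hQ) β
    have h1 : (1 : ℝ≥0∞) - ENNReal.ofReal t = ENNReal.ofReal (1 - t) := by
      rw [ENNReal.ofReal_sub 1 ht0, ENNReal.ofReal_one]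
    have hfin1 : ENNReal.ofReal t ≠ ⊤ := ENNReal.ofReal_ne_top
    have hfin2 : (1 : ℝ≥0∞) - ENNReal.ofReal t ≠ ⊤ := by
      rw [h1]; exact ENNReal.ofReal_ne_top
    have h2 : ∫ ξ, max (L ξ - β) 0 ∂(R : Measure (Fin n → ℝ))
        = t * (∫ ξ, max (L ξ - β) 0 ∂(P : Measure (Fin n → ℝ)))
          + (1 - t) * ∫ ξ, max (L ξ - β) 0 ∂(Q : Measure (Fin n → ℝ)) := by
      rw [hRmeas, integral_add_measure (hiP.smul_measure hfin1) (hiQ.smul_measure hfin2),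
        integral_smul_measure, integral_smul_measure, h1,
        ENNReal.toReal_ofReal ht0, ENNReal.toReal_ofReal (by linarith : (0:ℝ) ≤ 1 - t)]
      simp [smul_eq_mul]
    rw [h2]
    ring
end

section
/- Let E be an r×n real matrix, f ∈ ℝ^r, and W = {ξ ∈ ℝⁿ : Eξ ≤ f}. Let m ∈ ℕ, let γ_1,…,γ_m ≥ 0 with Σ_j γ_j = 1, let μ_1,…,μ_m ∈ ℝⁿ, and let S_1,…,S_m be n×n real symmetric matrices. Fix a ∈ ℝⁿ, d ∈ ℝ, and ε ∈ (0,1). Suppose there exist β ∈ ℝ and, for each j, t_j ∈ ℝ, ω_j ∈ ℝⁿ, an n×n symmetric matrix Ω_j, and φ_j, ψ_j ∈ ℝ^r with φ_j ≥ 0, ψ_j ≥ 0 componentwise, such that: (i) ε·β + Σ_j γ_j ( t_j + μ_jᵀω_j + S_j • Ω_j ) ≤ 0; (ii) the block matrix [[Ω_j, ½(ω_j + Eᵀφ_j)], [½(ω_j + Eᵀφ_j)ᵀ, t_j − fᵀφ_j]] is positive semidefinite for each j; and (iii) the block matrix [[Ω_j, ½(ω_j − a + Eᵀψ_j)], [½(ω_j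 − a + Eᵀψ_j)ᵀ, t_j + β − d − fᵀψ_j]] is positive semidefinite for each j. Then for every family of Borel probability measures ρ_1,…,ρ_m on ℝⁿ with ρ_j(W) = 1, ∫ ξ dρ_j = μ_j and S_j − ∫ ξξᵀ dρ_j positive semidefinite for each j, the mixture P = Σ_j γ_j ρ_j satisfies CVaR_ε^P(ξ ↦ a·ξ + d) ≤ 0, where CVaR_ε^P(L) = inf_{β'∈ℝ} { β' + ε⁻¹ ∫ (L(ξ) − β')⁺ dP(ξ) } and M • Ω denotes the Frobenius inner product trace(MᵀΩ). -/
/-!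
Block `j` of the first LMI says that the quadratic `q_j ξ = ξᵀ Ω_j ξ + ω_jᵀ ξ + t_j` is
nonnegative on `W`, and block `j` of the second that `q_j ξ ≥ aᵀ ξ + d - β` on `W`: evaluate the
block matrix at `(ξ, 1)` and absorb `φ_jᵀ (f - E ξ) ≥ 0` (an S-procedure). Hence
`∫ (aᵀ ξ + d - β)⁺ dρ_j ≤ ∫ q_j dρ_j = tr(M_jᵀ Ω_j) + μ_jᵀ ω_j + t_j`, where `M_j` is the second
moment matrix of `ρ_j`, and `tr((S_j - M_j) Ω_j) ≥ 0` because both factors are positive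
semidefinite. Averaging with the weights `γ_j` and using (i) shows that the CVaR objective is
nonpositive already at `β' = β`.
-/

open Matrix MeasureTheory

namespace Matrix

open scoped MatrixOrder ComplexOrder in
theorem PosSemidef.trace_mul_nonneg {𝕜 n : Type*} [RCLike 𝕜] [Fintype n] [DecidableEq n]
    {A B : Matrix n n 𝕜} (hA : A.PosSemidef) (hB : B.PosSemidef) : 0 ≤ (A * B).trace := by
  obtain ⟨C, rfl⟩ := CStarAlgebra.nonneg_iff_eq_star_mul_self.mp hA.nonneg
  rw [mul_assoc, trace_mul_comm, star_eq_conjTranspose]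
  exact (hB.mul_mul_conjTranspose_same C).trace_nonneg

variable {k l : Type*} [Fintype k] [Fintype l]

theorem PosSemidef.trace_transpose_mul_le {M S Ω : Matrix k k ℝ} (hSM : (S - M).PosSemidef)
    (hΩ : Ω.PosSemidef) : (Mᵀ * Ω).trace ≤ (Sᵀ * Ω).trace := by
  classical
  have hsymm : (S - M)ᵀ = S - M := by simpa using hSM.1.eq
  have := hSM.trace_mul_nonneg hΩ
  rw [← hsymm, transpose_sub, sub_mul, trace_sub] at this
  linarith

theorem PosSemidef.quadratic_nonneg_of_fromBlocks {Q : Matrix k k ℝ} {b : k → ℝ} {c : ℝ}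
    (h : (fromBlocks Q (of fun i (_ : Unit) => b i / 2) (of fun (_ : Unit) i => b i / 2)
      (of fun (_ : Unit) (_ : Unit) => c)).PosSemidef) (ξ : k → ℝ) :
    0 ≤ ξ ⬝ᵥ (Q *ᵥ ξ) + b ⬝ᵥ ξ + c := by
  have h₀ := h.dotProduct_mulVec_nonneg (Sum.elim ξ 1)
  simp only [star_trivial, dotProduct, mulVec, Fintype.sum_sum_type, fromBlocks_apply₁₁,
    fromBlocks_apply₁₂, fromBlocks_apply₂₁, fromBlocks_apply₂₂, of_apply, Sum.elim_inl,
    Sum.elim_inr, Pi.one_apply, mul_one, one_mul, Fintype.sum_unique, mul_add,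
    Finset.sum_add_distrib] at h₀
  have hb : ∑ i, ξ i * (b i / 2) + ∑ i, b i / 2 * ξ i = b ⬝ᵥ ξ := by
    rw [← Finset.sum_add_distrib]; exact Finset.sum_congr rfl fun i _ => by ring
  simp only [dotProduct, mulVec] at hb ⊢
  linarith

theorem PosSemidef.quadratic_nonneg_of_mulVec_le {Q : Matrix k k ℝ} {b : k → ℝ} {c : ℝ}
    {E : Matrix l k ℝ} {f φ : l → ℝ} (hφ : 0 ≤ φ)
    (h : (fromBlocks Q (of fun i (_ : Unit) => (b + Eᵀ *ᵥ φ) i / 2)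
      (of fun (_ : Unit) i => (b + Eᵀ *ᵥ φ) i / 2)
      (of fun (_ : Unit) (_ : Unit) => c - f ⬝ᵥ φ)).PosSemidef)
    {ξ : k → ℝ} (hξ : E *ᵥ ξ ≤ f) : 0 ≤ ξ ⬝ᵥ (Q *ᵥ ξ) + b ⬝ᵥ ξ + c := by
  have h₀ := h.quadratic_nonneg_of_fromBlocks ξ
  have hslack : 0 ≤ φ ⬝ᵥ (f - E *ᵥ ξ) := dotProduct_nonneg_of_nonneg hφ (sub_nonneg.2 hξ)
  rw [add_dotProduct, mulVec_transpose, ← dotProduct_mulVec] at h₀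
  rw [dotProduct_sub, dotProduct_comm φ f] at hslack
  linarith

theorem dotProduct_mulVec_self_eq_sum {R : Type*} [CommSemiring R] (Q : Matrix k k R)
    (ξ : k → R) :
    ξ ⬝ᵥ (Q *ᵥ ξ) = ∑ i, ∑ i', Q i i' * (ξ i * ξ i') := by
  simp only [dotProduct, mulVec, Finset.mul_sum]
  exact Finset.sum_congr rfl fun i _ => Finset.sum_congr rfl fun i' _ => by ring

end Matrix

section SecondMoments

variable {k : Type*} [Fintype k] {ρ : Measure (k → ℝ)}

theorem integrable_dotProduct (h₁ : ∀ i, Integrable (fun ξ => ξ i) ρ) (b : k → ℝ) :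
    Integrable (fun ξ => b ⬝ᵥ ξ) ρ :=
  integrable_finsetSum _ fun i _ => (h₁ i).const_mul _

theorem integral_dotProduct (h₁ : ∀ i, Integrable (fun ξ => ξ i) ρ) (b : k → ℝ) :
    ∫ ξ, b ⬝ᵥ ξ ∂ρ = b ⬝ᵥ (fun i => ∫ ξ, ξ i ∂ρ) := by
  simp only [dotProduct]
  rw [integral_finsetSum _ fun i _ => (h₁ i).const_mul _]
  simp only [integral_const_mul]

theorem integrable_dotProduct_mulVec_self (h₂ : ∀ i i', Integrable (fun ξ => ξ i * ξ i') ρ)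
    (Q : Matrix k k ℝ) : Integrable (fun ξ => ξ ⬝ᵥ (Q *ᵥ ξ)) ρ := by
  simp only [dotProduct_mulVec_self_eq_sum]
  exact integrable_finsetSum _ fun i _ => integrable_finsetSum _ fun i' _ => (h₂ i i').const_mul _

theorem integral_dotProduct_mulVec_self (h₂ : ∀ i i', Integrable (fun ξ => ξ i * ξ i') ρ)
    (Q : Matrix k k ℝ) :
    ∫ ξ, ξ ⬝ᵥ (Q *ᵥ ξ) ∂ρ = ((of fun i i' => ∫ ξ, ξ i * ξ i' ∂ρ)ᵀ * Q).trace := by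
  simp only [dotProduct_mulVec_self_eq_sum]
  rw [integral_finsetSum _ fun i _ => integrable_finsetSum _ fun i' _ =>
    (h₂ i i').const_mul (Q i i')]
  simp only [trace, diag, mul_apply, transpose_apply, of_apply]
  rw [Finset.sum_comm]
  refine Finset.sum_congr rfl fun i _ => ?_
  rw [integral_finsetSum _ fun i' _ => (h₂ i i').const_mul (Q i i')]
  exact Finset.sum_congr rfl fun i' _ => by rw [integral_const_mul, mul_comm]

theorem integrable_quadratic [IsFiniteMeasure ρ] (h₁ : ∀ i, Integrable (fun ξ => ξ i) ρ)
    (h₂ : ∀ i i', Integrable (fun ξ => ξ i * ξ i') ρ) (Q : Matrix k k ℝ) (b : k → ℝ) (c : ℝ) :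
    Integrable (fun ξ => ξ ⬝ᵥ (Q *ᵥ ξ) + b ⬝ᵥ ξ + c) ρ :=
  ((integrable_dotProduct_mulVec_self h₂ Q).add (integrable_dotProduct h₁ b)).add
    (integrable_const c)

theorem integral_quadratic_le [IsProbabilityMeasure ρ] (h₁ : ∀ i, Integrable (fun ξ => ξ i) ρ)
    (h₂ : ∀ i i', Integrable (fun ξ => ξ i * ξ i') ρ) {Q S : Matrix k k ℝ} (hQ : Q.PosSemidef)
    (hS : (S - of fun i i' => ∫ ξ, ξ i * ξ i' ∂ρ).PosSemidef) (b : k → ℝ) (c : ℝ) :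
    ∫ ξ, ξ ⬝ᵥ (Q *ᵥ ξ) + b ⬝ᵥ ξ + c ∂ρ ≤ (Sᵀ * Q).trace + b ⬝ᵥ (fun i => ∫ ξ, ξ i ∂ρ) + c := by
  have hquad := integrable_dotProduct_mulVec_self h₂ Q
  have hlin := integrable_dotProduct h₁ b
  have hsum : Integrable (fun ξ => ξ ⬝ᵥ (Q *ᵥ ξ) + b ⬝ᵥ ξ) ρ := hquad.add hlin
  rw [integral_add hsum (integrable_const c), integral_add hquad hlin,
    integral_dotProduct_mulVec_self h₂, integral_dotProduct h₁, integral_const, probReal_univ,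
    one_smul]
  linarith [hS.trace_transpose_mul_le hQ]

end SecondMoments

theorem ae_mulVec_le_of_measure_eq_one {k l : Type*} [Fintype k] {ρ : Measure (k → ℝ)}
    [IsProbabilityMeasure ρ] {E : Matrix l k ℝ} {f : l → ℝ} (h : ρ {ξ | E *ᵥ ξ ≤ f} = 1) :
    ∀ᵐ ξ ∂ρ, E *ᵥ ξ ≤ f :=
  (mem_ae_iff_prob_eq_one
    (isClosed_le (continuous_const.matrix_mulVec continuous_id) continuous_const).measurableSet).2 h

theorem integrable_max_zero_of_ae_le {α : Type*} [MeasurableSpace α] {ρ : Measure α}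
    {L g : α → ℝ} (hL : AEStronglyMeasurable L ρ) (hg : Integrable g ρ) (hLg : L ≤ᵐ[ρ] g)
    (hg₀ : 0 ≤ᵐ[ρ] g) : Integrable (fun x => max (L x) 0) ρ := by
  refine hg.mono' (hL.sup aestronglyMeasurable_const) ?_
  filter_upwards [hLg, hg₀] with x hx hx₀
  rw [Real.norm_of_nonneg (le_max_right _ _)]
  exact max_le hx hx₀

theorem integral_finsetSum_ofReal_smul_measure {α ι : Type*} [MeasurableSpace α] (s : Finset ι)
    {ρ : ι → Measure α} {c : ι → ℝ} (hc : ∀ i ∈ s, 0 ≤ c i) {F : α → ℝ}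
    (hF : ∀ i ∈ s, Integrable F (ρ i)) :
    ∫ x, F x ∂(∑ i ∈ s, ENNReal.ofReal (c i) • ρ i) = ∑ i ∈ s, c i * ∫ x, F x ∂ρ i := by
  rw [integral_finsetSum_measure fun i hi => (hF i hi).smul_measure ENNReal.ofReal_ne_top]
  refine Finset.sum_congr rfl fun i hi => ?_
  rw [integral_smul_measure, ENNReal.toReal_ofReal (hc i hi), smul_eq_mul]

theorem integral_max_sub_le_of_lmi {k l : Type*} [Fintype k] [Fintype l]
    {ρ : Measure (k → ℝ)} [IsProbabilityMeasure ρ] {E : Matrix l k ℝ} {f : l → ℝ}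
    (hW : ρ {ξ | E *ᵥ ξ ≤ f} = 1) (h₁ : ∀ i, Integrable (fun ξ => ξ i) ρ) {μ : k → ℝ}
    (hμ : ∀ i, ∫ ξ, ξ i ∂ρ = μ i) (h₂ : ∀ i i', Integrable (fun ξ => ξ i * ξ i') ρ)
    {S : Matrix k k ℝ} (hS : (S - of fun i i' => ∫ ξ, ξ i * ξ i' ∂ρ).PosSemidef)
    {a ω : k → ℝ} {d β t : ℝ} {Ω : Matrix k k ℝ} {φ ψ : l → ℝ} (hφ : 0 ≤ φ) (hψ : 0 ≤ ψ)
    (hLMI₁ : (fromBlocks Ω (of fun i (_ : Unit) => (ω + Eᵀ *ᵥ φ) i / 2)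
      (of fun (_ : Unit) i => (ω + Eᵀ *ᵥ φ) i / 2)
      (of fun (_ : Unit) (_ : Unit) => t - f ⬝ᵥ φ)).PosSemidef)
    (hLMI₂ : (fromBlocks Ω (of fun i (_ : Unit) => (ω - a + Eᵀ *ᵥ ψ) i / 2)
      (of fun (_ : Unit) i => (ω - a + Eᵀ *ᵥ ψ) i / 2)
      (of fun (_ : Unit) (_ : Unit) => t + β - d - f ⬝ᵥ ψ)).PosSemidef) :
    Integrable (fun ξ => max (a ⬝ᵥ ξ + d - β) 0) ρ ∧
      ∫ ξ, max (a ⬝ᵥ ξ + d - β) 0 ∂ρ ≤ t + μ ⬝ᵥ ω + (Sᵀ * Ω).trace := by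
  set q : (k → ℝ) → ℝ := fun ξ => ξ ⬝ᵥ (Ω *ᵥ ξ) + ω ⬝ᵥ ξ + t
  have hq_nonneg : 0 ≤ᵐ[ρ] q :=
    (ae_mulVec_le_of_measure_eq_one hW).mono fun _ hξ =>
      hLMI₁.quadratic_nonneg_of_mulVec_le hφ hξ
  have hq_ge : (fun ξ => a ⬝ᵥ ξ + d - β) ≤ᵐ[ρ] q := by
    filter_upwards [ae_mulVec_le_of_measure_eq_one hW] with ξ hξ
    have := hLMI₂.quadratic_nonneg_of_mulVec_le hψ hξ
    simp only [sub_dotProduct, q] at this ⊢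
    linarith
  have hq_int : Integrable q ρ := integrable_quadratic h₁ h₂ _ _ _
  refine ⟨integrable_max_zero_of_ae_le
    (by fun_prop : Continuous fun ξ : k → ℝ => a ⬝ᵥ ξ + d - β).aestronglyMeasurable
    hq_int hq_ge hq_nonneg, ?_⟩
  refine (integral_mono_of_nonneg (ae_of_all _ fun _ => le_max_right _ _) hq_int
    (by filter_upwards [hq_ge, hq_nonneg] with ξ h h₀ using max_le h h₀)).trans ?_
  have hΩ : Ω.PosSemidef := hLMI₁.submatrix Sum.inl
  have := integral_quadratic_le h₁ h₂ hΩ hS ω t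
  rw [show (fun i => ∫ ξ, ξ i ∂ρ) = μ from funext hμ, dotProduct_comm ω] at this
  linarith

theorem lmi_certifies_dr_cvar_general {n r m : ℕ}
    (E : Matrix (Fin r) (Fin n) ℝ) (f : Fin r → ℝ)
    (γ : Fin m → ℝ) (hγ : ∀ j, 0 ≤ γ j)
    (μ : Fin m → Fin n → ℝ)
    (S : Fin m → Matrix (Fin n) (Fin n) ℝ)
    (a : Fin n → ℝ) (d : ℝ) (ε : ℝ) (hε : ε ∈ Set.Ioo (0 : ℝ) 1)
    (β : ℝ) (t : Fin m → ℝ) (ω : Fin m → Fin n → ℝ)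
    (Ω : Fin m → Matrix (Fin n) (Fin n) ℝ)
    (φ ψ : Fin m → Fin r → ℝ)
    (hφ : ∀ j i, 0 ≤ φ j i) (hψ : ∀ j i, 0 ≤ ψ j i)
    (hobj : ε * β + ∑ j, γ j * (t j + μ j ⬝ᵥ ω j + ((S j)ᵀ * Ω j).trace) ≤ 0)
    (hLMI1 : ∀ j, (Matrix.fromBlocks (Ω j)
        (Matrix.of fun i (_ : Unit) => (ω j + Eᵀ *ᵥ φ j) i / 2)
        (Matrix.of fun (_ : Unit) i => (ω j + Eᵀ *ᵥ φ j) i / 2)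
        (Matrix.of fun (_ : Unit) (_ : Unit) => t j - f ⬝ᵥ φ j)).PosSemidef)
    (hLMI2 : ∀ j, (Matrix.fromBlocks (Ω j)
        (Matrix.of fun i (_ : Unit) => (ω j - a + Eᵀ *ᵥ ψ j) i / 2)
        (Matrix.of fun (_ : Unit) i => (ω j - a + Eᵀ *ᵥ ψ j) i / 2)
        (Matrix.of fun (_ : Unit) (_ : Unit) => t j + β - d - f ⬝ᵥ ψ j)).PosSemidef) :
    ∀ ρ : Fin m → Measure (Fin n → ℝ),
      (∀ j, IsProbabilityMeasure (ρ j)) →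
      (∀ j, ρ j {ξ | ∀ i, (E *ᵥ ξ) i ≤ f i} = 1) →
      (∀ j i, Integrable (fun ξ => ξ i) (ρ j)) →
      (∀ j i, ∫ ξ, ξ i ∂(ρ j) = μ j i) →
      (∀ j i i', Integrable (fun ξ => ξ i * ξ i') (ρ j)) →
      (∀ j, (S j - Matrix.of fun i i' => ∫ ξ, ξ i * ξ i' ∂(ρ j)).PosSemidef) →
      (⨅ β' : ℝ, β' + ε⁻¹ *
          ∫ ξ, max (a ⬝ᵥ ξ + d - β') 0
            ∂(∑ j, ENNReal.ofReal (γ j) • ρ j)) ≤ 0 := by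
  intro ρ hρ hW h₁ hmean h₂ hmoment
  have hcomp (j) := integral_max_sub_le_of_lmi (hW j) (h₁ j) (hmean j) (h₂ j) (hmoment j)
    (hφ j) (hψ j) (hLMI1 j) (hLMI2 j)
  refine Real.iInf_nonpos' ⟨β, ?_⟩
  rw [integral_finsetSum_ofReal_smul_measure _ (fun j _ => hγ j) fun j _ => (hcomp j).1]
  have hmix := Finset.sum_le_sum fun j (_ : j ∈ Finset.univ) =>
    mul_le_mul_of_nonneg_left (hcomp j).2 (hγ j)
  have hε₀ := hε.1
  calc β + ε⁻¹ * ∑ j, γ j * ∫ ξ, max (a ⬝ᵥ ξ + d - β) 0 ∂ρ j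
      ≤ β + ε⁻¹ * (-(ε * β)) := by gcongr; linarith
    _ = 0 := by field_simp; ring

/-- sufficiency direction of Theorem 1: feasibility of the LMI system (B.14)
certifies the distributionally robust CVaR constraint `CVaR_ε^P(a·ξ + d) ≤ 0` for every
mixture `P = Σ_j γ_j ρ_j` of probability measures `ρ_j` supported on `W = {ξ : Eξ ≤ f}`
with mean `μ_j` and second moment bounded by `S_j`. -/
theorem lmi_certifies_dr_cvar {n r m : ℕ}
    (E : Matrix (Fin r) (Fin n) ℝ) (f : Fin r → ℝ)
    (γ : Fin m → ℝ) (hγ : ∀ j, 0 ≤ γ j) (hγsum : ∑ j, γ j = 1)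
    (μ : Fin m → Fin n → ℝ)
    (S : Fin m → Matrix (Fin n) (Fin n) ℝ) (hSsymm : ∀ j, (S j).IsSymm)
    (a : Fin n → ℝ) (d : ℝ) (ε : ℝ) (hε : ε ∈ Set.Ioo (0 : ℝ) 1)
    (β : ℝ) (t : Fin m → ℝ) (ω : Fin m → Fin n → ℝ)
    (Ω : Fin m → Matrix (Fin n) (Fin n) ℝ) (hΩsymm : ∀ j, (Ω j).IsSymm)
    (φ ψ : Fin m → Fin r → ℝ)
    (hφ : ∀ j i, 0 ≤ φ j i) (hψ : ∀ j i, 0 ≤ ψ j i)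
    (hobj : ε * β + ∑ j, γ j * (t j + μ j ⬝ᵥ ω j + ((S j)ᵀ * Ω j).trace) ≤ 0)
    (hLMI1 : ∀ j, (Matrix.fromBlocks (Ω j)
        (Matrix.of fun i (_ : Unit) => (ω j + Eᵀ *ᵥ φ j) i / 2)
        (Matrix.of fun (_ : Unit) i => (ω j + Eᵀ *ᵥ φ j) i / 2)
        (Matrix.of fun (_ : Unit) (_ : Unit) => t j - f ⬝ᵥ φ j)).PosSemidef)
    (hLMI2 : ∀ j, (Matrix.fromBlocks (Ω j)
        (Matrix.of fun i (_ : Unit) => (ω j - a + Eᵀ *ᵥ ψ j) i / 2)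
        (Matrix.of fun (_ : Unit) i => (ω j - a + Eᵀ *ᵥ ψ j) i / 2)
        (Matrix.of fun (_ : Unit) (_ : Unit) => t j + β - d - f ⬝ᵥ ψ j)).PosSemidef) :
    ∀ ρ : Fin m → Measure (Fin n → ℝ),
      (∀ j, IsProbabilityMeasure (ρ j)) →
      (∀ j, ρ j {ξ | ∀ i, (E *ᵥ ξ) i ≤ f i} = 1) →
      (∀ j i, Integrable (fun ξ => ξ i) (ρ j)) →
      (∀ j i, ∫ ξ, ξ i ∂(ρ j) = μ j i) →
      (∀ j i i', Integrable (fun ξ => ξ i * ξ i') (ρ j)) →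
      (∀ j, (S j - Matrix.of fun i i' => ∫ ξ, ξ i * ξ i' ∂(ρ j)).PosSemidef) →
      (⨅ β' : ℝ, β' + ε⁻¹ *
          ∫ ξ, max (a ⬝ᵥ ξ + d - β') 0
            ∂(∑ j, ENNReal.ofReal (γ j) • ρ j)) ≤ 0 :=
  lmi_certifies_dr_cvar_general E f γ hγ μ S a d ε hε β t ω Ω φ ψ hφ hψ hobj hLMI1 hLMI2
end
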